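/- arXiv:1906.07832 — 7 statements merged into one kernel-verified Lean document; each statement's English description precedes it below -/
import Mathlib

section
/- Let N ≥ 1 and let g ∈ L²(dω) with ‖g‖_{L²(dω)} ≤ 1. Set ‖g‖_{dω,1} := ∑_{n=1}^N |⟨e_n, g⟩_{L²(dω)}| and r_N := ∑_{m≥N+1} σ_m. Then the expectation under the projection DPP of the squared approximation error of the mean element by its orthogonal projection onto T(x) satisfies E_DPP[ ‖μ_g − Π_{T(x)} μ_g‖_F² ] ≤ 2 σ_{N+1} + 2 ‖g‖_{dω,1}² ( N·r_N + ∑_{ℓ=2}^N (σ_1/ℓ!²) (N·r_N/σ_1)^ℓ ). -/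
/-!
Indices start at 0: `β_m = ⟨e_m, g⟩`, `μ_g = ∑_m √σ_m β_m e_m^F`, and `σ_N` is the paper's
`σ_{N+1}`.
Write `E_{n←m}(x)` for `E(x)` with its `n`-th row replaced by `(e_m(x_j))_j`. By Cramer's rule the
element `w = det E(x)⁻¹ ∑_j α_j k(x_j)` of `T(x)`, with `α = β ᵥ* adj(E(x)ᵀ)`, has `m`-th coordinate
`√σ_m ∑_{n<N} β_n det E_{n←m}(x) / det E(x)`, which is `√σ_m β_m` for `m < N`. Comparing `μ_g`
with its truncation `f₀` to the first `N` coordinates through `w` gives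
`‖μ_g - Π μ_g‖² det E(x)² ≤ 2 ‖μ_g - f₀‖² det E(x)² + 2 ∑_{m≥N} σ_m (∑_n β_n det E_{n←m}(x))²`
and `‖μ_g - f₀‖² ≤ σ_N`. By Andreief's identity
`∫ det (a_i(x_j)) det (b_i(x_j)) dω^N = N! det (∫ a_i b_k dω)`, `∫ det E² dω^N = N!` and the
`det E_{n←m}` (`m ≥ N`, `n < N`) are orthogonal in `L²(ω^N)` with squared norm `N!`. Integrating bounds the
expectation by `2 σ_N + 2 (∑_{n<N} β_n²) r_N`, and `∑_{n<N} β_n² ≤ ‖g‖_{dω,1}²`.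
-/

open scoped RealInnerProductSpace BigOperators
open MeasureTheory

noncomputable instance spanRangeFiniteDimensional
    {F : Type*} [NormedAddCommGroup F] [InnerProductSpace ℝ F] {ι : Type*} [Finite ι]
    (f : ι → F) : FiniteDimensional ℝ (Submodule.span ℝ (Set.range f)) :=
  FiniteDimensional.span_of_finite ℝ (Set.finite_range f)

open scoped Matrix

namespace Matrix

open Equiv

variable {ι R : Type*} [Fintype ι] [DecidableEq ι] [CommRing R]

theorem det_mul_det_eq_sum_perm (A B : Matrix ι ι R) :
    A.det * B.det = ∑ π : Perm ι, ∑ τ : Perm ι,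
      (Perm.sign π * Perm.sign τ : R) * ∏ j, A (π j) j * B (τ j) j := by
  simp_rw [det_apply', Finset.sum_mul_sum, Finset.prod_mul_distrib]
  exact Finset.sum_congr rfl fun _ _ => Finset.sum_congr rfl fun _ _ => by ring

theorem sum_sign_mul_sign_mul_prod_eq (G : Matrix ι ι R) :
    ∑ π : Perm ι, ∑ τ : Perm ι, (Perm.sign π * Perm.sign τ : R) * ∏ j, G (π j) (τ j)
      = (Fintype.card ι).factorial * G.det := by
  have hπ : ∀ π : Perm ι,
      ∑ τ : Perm ι, (Perm.sign τ : R) * ∏ j, G (π j) (τ j) = Perm.sign π * G.det := by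
    intro π
    rw [← det_permute, ← det_transpose, det_apply']
    rfl
  simp_rw [mul_assoc, ← Finset.mul_sum, hπ, ← mul_assoc, ← Int.cast_mul, ← Units.val_mul,
    Int.units_mul_self, Units.val_one, Int.cast_one, one_mul, Finset.sum_const, Finset.card_univ,
    Fintype.card_perm, nsmul_eq_mul]

theorem sum_mul_det_updateRow_self (A : Matrix ι ι R) (β : ι → R) (i : ι) :
    ∑ n, β n * (A.updateRow n (A i)).det = β i * A.det := by
  rw [Finset.sum_eq_single i (fun n _ hn => by rw [det_updateRow_eq_zero hn.symm, mul_zero])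
    (fun h => absurd (Finset.mem_univ i) h), updateRow_eq_self]

theorem vecMul_adjugate_transpose_dotProduct (A : Matrix ι ι R) (β v : ι → R) :
    (β ᵥ* Aᵀ.adjugate) ⬝ᵥ v = ∑ n, β n * (A.updateRow n v).det := by
  rw [← dotProduct_mulVec, ← cramer_eq_adjugate_mulVec]
  simp only [dotProduct, cramer_transpose_apply]

end Matrix

theorem MeasureTheory.integrable_tsum_of_nonneg {α : Type*} [MeasurableSpace α] {μ : Measure α}
    {F : ℕ → α → ℝ} (hF : ∀ k, Integrable (F k) μ) (hF0 : ∀ k x, 0 ≤ F k x)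
    (hpt : ∀ x, Summable fun k => F k x) (hsum : Summable fun k => ∫ x, F k x ∂μ) :
    Integrable (fun x => ∑' k, F k x) μ := by
  refine ⟨aestronglyMeasurable_of_tendsto_ae Filter.atTop
    (fun n => Finset.aestronglyMeasurable_sum (Finset.range n) fun k _ => (hF k).1)
    (ae_of_all _ fun x => by
      simpa only [Finset.sum_apply] using (hpt x).hasSum.tendsto_sum_nat), ?_⟩
  rw [hasFiniteIntegral_iff_ofReal (ae_of_all _ fun x => tsum_nonneg (hF0 · x))]
  calc ∫⁻ x, ENNReal.ofReal (∑' k, F k x) ∂μ = ∑' k, ∫⁻ x, ENNReal.ofReal (F k x) ∂μ := by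
        simp_rw [ENNReal.ofReal_tsum_of_nonneg (hF0 · _) (hpt _)]
        exact lintegral_tsum fun k => (hF k).1.aemeasurable.ennreal_ofReal
    _ = ENNReal.ofReal (∑' k, ∫ x, F k x ∂μ) := by
        rw [ENNReal.ofReal_tsum_of_nonneg (fun k => integral_nonneg (hF0 k)) hsum]
        exact tsum_congr fun k =>
          (ofReal_integral_eq_lintegral_ofReal (hF k) (ae_of_all _ (hF0 k))).symm
    _ < ⊤ := ENNReal.ofReal_lt_top

section Andreief

open Equiv

variable {ι X : Type*} [Fintype ι] [MeasurableSpace X] {ω : Measure X}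
  [SigmaFinite ω] {f g : ι → X → ℝ} (hfg : ∀ i k, Integrable (fun z => f i z * g k z) ω)
include hfg

theorem integrable_prod_mul_pi (π τ : Perm ι) :
    Integrable (fun x : ι → X => ∏ j, f (π j) (x j) * g (τ j) (x j)) (Measure.pi fun _ => ω) :=
  Integrable.fintype_prod fun j => hfg (π j) (τ j)

variable [DecidableEq ι]

theorem integrable_det_mul_det :
    Integrable (fun x : ι → X =>
      (Matrix.of fun i j => f i (x j)).det * (Matrix.of fun i j => g i (x j)).det)
      (Measure.pi fun _ => ω) := by
  simp_rw [Matrix.det_mul_det_eq_sum_perm, Matrix.of_apply]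
  exact integrable_finsetSum _ fun π _ => integrable_finsetSum _ fun τ _ =>
    (integrable_prod_mul_pi hfg π τ).const_mul _

/-- **Andreief's identity**. -/
theorem integral_det_mul_det :
    ∫ x : ι → X, (Matrix.of fun i j => f i (x j)).det * (Matrix.of fun i j => g i (x j)).det
        ∂(Measure.pi fun _ => ω)
      = (Fintype.card ι).factorial * (Matrix.of fun i k => ∫ z, f i z * g k z ∂ω).det := by
  simp_rw [Matrix.det_mul_det_eq_sum_perm, Matrix.of_apply]
  rw [integral_finsetSum _ fun π _ => integrable_finsetSum _ fun τ _ =>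
    (integrable_prod_mul_pi hfg π τ).const_mul _]
  refine (Finset.sum_congr rfl fun π _ => ?_).trans (Matrix.sum_sign_mul_sign_mul_prod_eq _)
  rw [integral_finsetSum _ fun τ _ => (integrable_prod_mul_pi hfg π τ).const_mul _]
  refine Finset.sum_congr rfl fun τ _ => ?_
  rw [integral_const_mul, integral_fintype_prod_eq_prod (fun j z => f (π j) z * g (τ j) z)]
  rfl

end Andreief

section Bessel

variable {X κ : Type*} [MeasurableSpace X] {ω : Measure X} [DecidableEq κ]

theorem inner_toLp_toLp {f g : X → ℝ} (hf : MemLp f 2 ω) (hg : MemLp g 2 ω) :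
    ⟪hf.toLp f, hg.toLp g⟫ = ∫ z, f z * g z ∂ω := by
  rw [L2.inner_def]
  refine integral_congr_ae ?_
  filter_upwards [hf.coeFn_toLp, hg.coeFn_toLp] with z hfz hgz
  simp [hfz, hgz, mul_comm]

variable {e : κ → X → ℝ} (he : ∀ m, MemLp (e m) 2 ω)
  (he_on : ∀ m n, ∫ z, e m z * e n z ∂ω = if m = n then 1 else 0)
include he he_on

theorem orthonormal_toLp : Orthonormal ℝ fun m => (he m).toLp (e m) :=
  orthonormal_iff_ite.mpr fun m n => by rw [inner_toLp_toLp, he_on]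

variable {g : X → ℝ} (hg : MemLp g 2 ω)
include hg

theorem summable_sq_integral_mul : Summable fun m => (∫ z, e m z * g z ∂ω) ^ 2 := by
  simpa [inner_toLp_toLp] using (orthonormal_toLp he he_on).inner_products_summable (hg.toLp g)

theorem tsum_sq_integral_mul_le : ∑' m, (∫ z, e m z * g z ∂ω) ^ 2 ≤ ∫ z, g z ^ 2 ∂ω := by
  have h := (orthonormal_toLp he he_on).tsum_inner_products_le (hg.toLp g)
  rw [← real_inner_self_eq_norm_sq, inner_toLp_toLp] at h
  simpa [inner_toLp_toLp, sq] using h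

end Bessel

theorem memLp_two_of_integral_mul_self_ne_zero {X : Type*} [MeasurableSpace X] {ω : Measure X}
    {f : X → ℝ} (hf : AEStronglyMeasurable f ω) (h : ∫ z, f z * f z ∂ω ≠ 0) : MemLp f 2 ω :=
  (memLp_two_iff_integrable_sq hf).2 <| by
    simpa only [sq] using Integrable.of_integral_ne_zero h

/-- `evalMatrix e Fin.val x` is the matrix `E(x)` of the paper. -/
def evalMatrix {ι κ X : Type*} (e : κ → X → ℝ) (ρ : ι → κ) (x : ι → X) : Matrix ι ι ℝ :=
  Matrix.of fun i j => e (ρ i) (x j)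

theorem evalMatrix_updateRow {ι κ X : Type*} [DecidableEq ι] (e : κ → X → ℝ) (ρ : ι → κ)
    (x : ι → X) (n : ι) (m : κ) :
    (evalMatrix e ρ x).updateRow n (fun j => e m (x j))
      = evalMatrix e (Function.update ρ n m) x := by
  ext i j
  by_cases h : i = n
  · subst h
    simp [evalMatrix]
  · simp [evalMatrix, h]

section OrthonormalDeterminants

variable {ι κ X : Type*} [Fintype ι] [DecidableEq ι] [MeasurableSpace X]
  {ω : Measure X} [SigmaFinite ω] {e : κ → X → ℝ} (he : ∀ m, MemLp (e m) 2 ω)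
include he

theorem integrable_det_evalMatrix_mul_det (ρ ρ' : ι → κ) :
    Integrable (fun x => (evalMatrix e ρ x).det * (evalMatrix e ρ' x).det)
      (Measure.pi fun _ => ω) :=
  integrable_det_mul_det fun i k => (he (ρ i)).integrable_mul (he (ρ' k))

variable [DecidableEq κ] (he_on : ∀ m n, ∫ z, e m z * e n z ∂ω = if m = n then 1 else 0)
include he_on

theorem integral_det_evalMatrix_mul_det (ρ ρ' : ι → κ) :
    ∫ x, (evalMatrix e ρ x).det * (evalMatrix e ρ' x).det ∂(Measure.pi fun _ => ω)
      = (Fintype.card ι).factorial *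
          (Matrix.of fun i k => if ρ i = ρ' k then 1 else 0 : Matrix ι ι ℝ).det := by
  refine (integral_det_mul_det (f := fun i => e (ρ i)) (g := fun k => e (ρ' k))
    fun i k => (he (ρ i)).integrable_mul (he (ρ' k))).trans ?_
  simp_rw [he_on]

theorem integral_det_evalMatrix_mul_self {ρ : ι → κ} (hρ : ρ.Injective) :
    ∫ x, (evalMatrix e ρ x).det * (evalMatrix e ρ x).det ∂(Measure.pi fun _ => ω)
      = (Fintype.card ι).factorial := by
  have hG : (Matrix.of fun i k => if ρ i = ρ k then 1 else 0 : Matrix ι ι ℝ) = 1 := by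
    ext i k
    simp [Matrix.one_apply, hρ.eq_iff]
  rw [integral_det_evalMatrix_mul_det he he_on, hG, Matrix.det_one, mul_one]

theorem integral_det_evalMatrix_mul_det_eq_zero {ρ ρ' : ι → κ} {i : ι}
    (hi : ∀ k, ρ' k ≠ ρ i) :
    ∫ x, (evalMatrix e ρ x).det * (evalMatrix e ρ' x).det ∂(Measure.pi fun _ => ω) = 0 := by
  rw [integral_det_evalMatrix_mul_det he he_on,
    Matrix.det_eq_zero_of_row_eq_zero i fun k => if_neg (hi k).symm, mul_zero]

end OrthonormalDeterminants

section HilbertBasis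

variable {ι F : Type*} [NormedAddCommGroup F] [InnerProductSpace ℝ F]

theorem HilbertBasis.hasSum_inner_sq (b : HilbertBasis ι ℝ F) (v : F) :
    HasSum (fun i => ⟪b i, v⟫ ^ 2) (‖v‖ ^ 2) := by
  simpa [← real_inner_self_eq_norm_sq, real_inner_comm v, sq] using b.hasSum_inner_mul_inner v v

theorem HilbertBasis.hasSum_inner_sq_nat_add (b : HilbertBasis ℕ ℝ F) {v : F} {N : ℕ}
    (hv : ∀ m < N, ⟪b m, v⟫ = 0) : HasSum (fun k => ⟪b (N + k), v⟫ ^ 2) (‖v‖ ^ 2) := by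
  have h := (hasSum_nat_add_iff' N).mpr (b.hasSum_inner_sq v)
  rw [Finset.sum_eq_zero fun m hm => by rw [hv m (Finset.mem_range.mp hm), sq, zero_mul],
    sub_zero] at h
  simpa only [add_comm N] using h

theorem HilbertBasis.inner_tsum_smul (b : HilbertBasis ι ℝ F) {c : ι → ℝ}
    (hc : Summable fun i => c i ^ 2) (i : ι) : ⟪b i, ∑' j, c j • b j⟫ = c i := by
  let y : lp (fun _ : ι => ℝ) 2 := ⟨c, memℓp_gen (by simpa using hc)⟩
  rw [(b.hasSum_repr_symm y).tsum_eq, ← b.repr_apply_apply, LinearIsometryEquiv.apply_symm_apply]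

theorem Submodule.norm_sub_orthogonalProjectionOnto_le (K : Submodule ℝ F)
    [K.HasOrthogonalProjection] (v : F) {w : F} (hw : w ∈ K) :
    ‖v - (K.orthogonalProjectionOnto v : F)‖ ≤ ‖v - w‖ := by
  rw [← Submodule.starProjection_apply, Submodule.starProjection_minimal]
  exact ciInf_le ⟨0, by rintro _ ⟨_, rfl⟩; positivity⟩ (⟨w, hw⟩ : K)

end HilbertBasis

section Interpolation

variable {F X : Type*} [NormedAddCommGroup F] [InnerProductSpace ℝ F]
  (b : HilbertBasis ℕ ℝ F) (σ : ℕ → ℝ) (e : ℕ → X → ℝ) (Kf : X → F) (β : ℕ → ℝ) {N : ℕ}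

/-- With `β m = ⟨e_m, g⟩`, the truncation `f₀` of `μ_g` to its first `N` coordinates. -/
noncomputable def truncatedMean (N : ℕ) : F := ∑ n ∈ Finset.range N, (√(σ n) * β n) • b n

/-- `det E(x)` times the element of `T(x)` that Cramer's rule produces to match the first `N`
coordinates of `μ_g`. -/
def cramerVector (x : Fin N → X) : F :=
  ∑ j, ((fun n : Fin N => β n) ᵥ* (evalMatrix e Fin.val x)ᵀ.adjugate) j • Kf (x j)

def replacedRowDetSum (m : ℕ) (x : Fin N → X) : ℝ :=
  ∑ n : Fin N, β n * (evalMatrix e (Function.update Fin.val n m) x).det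

theorem inner_truncatedMean (m : ℕ) :
    ⟪b m, truncatedMean b σ β N⟫ = if m < N then √(σ m) * β m else 0 := by
  simp [truncatedMean, inner_sum, real_inner_smul_right, orthonormal_iff_ite.mp b.orthonormal]

variable {b σ β}

theorem norm_sub_truncatedMean_sq_le (hσ : ∀ m, 0 ≤ σ m) (hσanti : Antitone σ)
    (hβ : Summable fun m => β m ^ 2) {μ : F} (hμ : ∀ m, ⟪b m, μ⟫ = √(σ m) * β m) :
    ‖μ - truncatedMean b σ β N‖ ^ 2 ≤ σ N * ∑' m, β m ^ 2 := by
  rw [← (b.hasSum_inner_sq _).tsum_eq, ← tsum_mul_left]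
  refine (b.hasSum_inner_sq _).summable.tsum_le_tsum (fun m => ?_) (hβ.mul_left _)
  rw [inner_sub_right, hμ, inner_truncatedMean]
  split_ifs with hm
  · rw [sub_self, sq, zero_mul]
    exact mul_nonneg (hσ N) (sq_nonneg _)
  · rw [sub_zero, mul_pow, Real.sq_sqrt (hσ m)]
    exact mul_le_mul_of_nonneg_right (hσanti (not_lt.mp hm)) (sq_nonneg _)

theorem summable_sqrt_mul_sq (hσ : ∀ m, 0 ≤ σ m) (hσanti : Antitone σ)
    (hβ : Summable fun m => β m ^ 2) : Summable fun m => (√(σ m) * β m) ^ 2 := by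
  refine (hβ.mul_left (σ 0)).of_nonneg_of_le (fun _ => sq_nonneg _) fun m => ?_
  rw [mul_pow, Real.sq_sqrt (hσ m)]
  exact mul_le_mul_of_nonneg_right (hσanti (Nat.zero_le m)) (sq_nonneg _)

variable {e Kf} (β) (hKf : ∀ z m, ⟪b m, Kf z⟫ = √(σ m) * e m z)
include hKf

theorem inner_cramerVector (x : Fin N → X) (m : ℕ) :
    ⟪b m, cramerVector e Kf β x⟫ = √(σ m) *
      ∑ n : Fin N, β n * ((evalMatrix e Fin.val x).updateRow n fun j => e m (x j)).det := by
  simp_rw [cramerVector, inner_sum, real_inner_smul_right, hKf, mul_left_comm _ (√(σ m)),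
    ← Finset.mul_sum]
  rw [← Matrix.vecMul_adjugate_transpose_dotProduct]
  rfl

theorem inner_det_smul_truncatedMean_sub_cramerVector (x : Fin N → X) (m : ℕ) :
    ⟪b m, (evalMatrix e Fin.val x).det • truncatedMean b σ β N - cramerVector e Kf β x⟫
      = if m < N then 0 else -(√(σ m) * replacedRowDetSum e β m x) := by
  rw [inner_sub_right, real_inner_smul_right, inner_truncatedMean, inner_cramerVector β hKf]
  split_ifs with hm
  · have hrow : (fun j => e m (x j)) = evalMatrix e Fin.val x ⟨m, hm⟩ := rfl
    rw [hrow, Matrix.sum_mul_det_updateRow_self]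
    ring
  · simp_rw [evalMatrix_updateRow, replacedRowDetSum]
    ring

theorem hasSum_sigma_mul_replacedRowDetSum_sq (hσ : ∀ m, 0 ≤ σ m) (x : Fin N → X) :
    HasSum (fun k => σ (N + k) * replacedRowDetSum e β (N + k) x ^ 2)
      (‖(evalMatrix e Fin.val x).det • truncatedMean b σ β N - cramerVector e Kf β x‖ ^ 2) := by
  convert b.hasSum_inner_sq_nat_add (N := N) fun m hm => by
    rw [inner_det_smul_truncatedMean_sub_cramerVector β hKf, if_pos hm] using 1
  funext k
  rw [inner_det_smul_truncatedMean_sub_cramerVector β hKf, if_neg (by omega), neg_sq, mul_pow,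
      Real.sq_sqrt (hσ _)]

theorem norm_sub_orthogonalProjectionOnto_sq_mul_det_sq_le (hσ : ∀ m, 0 ≤ σ m) (μ : F)
    (x : Fin N → X) :
    ‖μ - (Submodule.orthogonalProjectionOnto (Submodule.span ℝ (Set.range fun j => Kf (x j))) μ :
        F)‖ ^ 2 * (evalMatrix e Fin.val x).det ^ 2
      ≤ 2 * ‖μ - truncatedMean b σ β N‖ ^ 2 * (evalMatrix e Fin.val x).det ^ 2
        + 2 * ∑' k, σ (N + k) * replacedRowDetSum e β (N + k) x ^ 2 := by
  set d := (evalMatrix e Fin.val x).det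
  set T := Submodule.span ℝ (Set.range fun j => Kf (x j))
  set f₀ := truncatedMean b σ β N
  set W := cramerVector e Kf β x
  rw [(hasSum_sigma_mul_replacedRowDetSum_sq β hKf hσ x).tsum_eq]
  rcases eq_or_ne d 0 with hd | hd
  · rw [hd, zero_pow two_ne_zero, mul_zero, mul_zero, zero_add]
    positivity
  have hW : d⁻¹ • W ∈ T :=
    T.smul_mem _ (T.sum_mem fun j _ => T.smul_mem _ (Submodule.subset_span ⟨j, rfl⟩))
  have hdW : ‖d • f₀ - W‖ = |d| * ‖f₀ - d⁻¹ • W‖ := by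
    rw [← Real.norm_eq_abs, ← norm_smul, smul_sub, smul_inv_smul₀ hd]
  calc ‖μ - (T.orthogonalProjectionOnto μ : F)‖ ^ 2 * d ^ 2
      ≤ (‖μ - f₀‖ + ‖f₀ - d⁻¹ • W‖) ^ 2 * d ^ 2 := by
        gcongr
        exact (T.norm_sub_orthogonalProjectionOnto_le μ hW).trans
          (norm_sub_le_norm_sub_add_norm_sub _ _ _)
    _ ≤ 2 * (‖μ - f₀‖ ^ 2 + ‖f₀ - d⁻¹ • W‖ ^ 2) * d ^ 2 := by
        gcongr
        exact add_sq_le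
    _ = 2 * ‖μ - f₀‖ ^ 2 * d ^ 2 + 2 * ‖d • f₀ - W‖ ^ 2 := by
        rw [hdW, mul_pow, sq_abs]
        ring

end Interpolation

theorem injective_update_val {N m : ℕ} (hm : N ≤ m) (n : Fin N) :
    (Function.update Fin.val n m).Injective := by
  intro i j hij
  simp only [Function.update_apply] at hij
  split_ifs at hij <;> first | (subst_vars; rfl) | omega

theorem update_val_ne_update_val {N m : ℕ} (hm : N ≤ m) {n n' : Fin N} (h : n ≠ n') (k : Fin N) :
    Function.update Fin.val n' m k ≠ Function.update Fin.val n m n' := by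
  rw [Function.update_of_ne (Ne.symm h), Function.update_apply]
  split_ifs with hk
  · omega
  · exact fun h' => hk (Fin.ext h')

section DPP

variable {X : Type*} [MeasurableSpace X] {ω : Measure X} [SigmaFinite ω] {e : ℕ → X → ℝ}
  (he : ∀ m, MemLp (e m) 2 ω) (he_on : ∀ m n, ∫ z, e m z * e n z ∂ω = if m = n then 1 else 0)
  (β : ℕ → ℝ) {N : ℕ}
include he

theorem integrable_replacedRowDetSum_sq (m : ℕ) :
    Integrable (fun x => replacedRowDetSum e β m x ^ 2) (Measure.pi fun _ : Fin N => ω) := by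
  simp_rw [replacedRowDetSum, sq, Finset.sum_mul_sum]
  exact integrable_finsetSum _ fun n _ => integrable_finsetSum _ fun n' _ => by
    simpa only [mul_mul_mul_comm] using
      (integrable_det_evalMatrix_mul_det he _ _).const_mul (β n * β n')

include he_on

theorem integral_replacedRowDetSum_sq {m : ℕ} (hm : N ≤ m) :
    ∫ x, replacedRowDetSum e β m x ^ 2 ∂(Measure.pi fun _ : Fin N => ω)
      = N.factorial * ∑ n : Fin N, β n ^ 2 := by
  have hterm : ∀ n n' : Fin N,
      ∫ x, β n * (evalMatrix e (Function.update Fin.val n m) x).det *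
          (β n' * (evalMatrix e (Function.update Fin.val n' m) x).det) ∂(Measure.pi fun _ => ω)
        = if n = n' then N.factorial * β n ^ 2 else 0 := by
    intro n n'
    simp_rw [mul_mul_mul_comm, integral_const_mul]
    split_ifs with h
    · subst h
      rw [integral_det_evalMatrix_mul_self he he_on (injective_update_val hm n), Fintype.card_fin]
      ring
    · rw [integral_det_evalMatrix_mul_det_eq_zero he he_on (update_val_ne_update_val hm h),
        mul_zero]
  have hint : ∀ n n' : Fin N, Integrable (fun x =>
      β n * (evalMatrix e (Function.update Fin.val n m) x).det *
        (β n' * (evalMatrix e (Function.update Fin.val n' m) x).det))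
      (Measure.pi fun _ => ω) := fun n n' => by
    simpa only [mul_mul_mul_comm] using
      (integrable_det_evalMatrix_mul_det he _ _).const_mul (β n * β n')
  simp_rw [replacedRowDetSum, sq, Finset.sum_mul_sum]
  rw [integral_finsetSum _ fun n _ => integrable_finsetSum _ fun n' _ => hint n n', Finset.mul_sum]
  refine Finset.sum_congr rfl fun n _ => ?_
  rw [integral_finsetSum _ fun n' _ => hint n n']
  simp_rw [hterm, Finset.sum_ite_eq, if_pos (Finset.mem_univ _), sq]

variable {σ : ℕ → ℝ}

theorem integral_sigma_mul_replacedRowDetSum_sq (k : ℕ) :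
    ∫ x, σ (N + k) * replacedRowDetSum e β (N + k) x ^ 2 ∂(Measure.pi fun _ : Fin N => ω)
      = σ (N + k) * (N.factorial * ∑ n : Fin N, β n ^ 2) := by
  rw [integral_const_mul, integral_replacedRowDetSum_sq he he_on β (Nat.le_add_right N k)]

theorem summable_integral_sigma_mul_replacedRowDetSum_sq (hσsum : Summable σ) : Summable fun k =>
    ∫ x, σ (N + k) * replacedRowDetSum e β (N + k) x ^ 2 ∂(Measure.pi fun _ : Fin N => ω) := by
  simp_rw [integral_sigma_mul_replacedRowDetSum_sq he he_on β]
  exact (hσsum.comp_injective (add_right_injective N)).mul_right _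

variable (hσ : ∀ m, 0 ≤ σ m) (hσsum : Summable σ)
include hσ hσsum

theorem integrable_tsum_sigma_mul_replacedRowDetSum_sq
    (hpt : ∀ x : Fin N → X, Summable fun k => σ (N + k) * replacedRowDetSum e β (N + k) x ^ 2) :
    Integrable (fun x => ∑' k, σ (N + k) * replacedRowDetSum e β (N + k) x ^ 2)
      (Measure.pi fun _ : Fin N => ω) :=
  integrable_tsum_of_nonneg (fun _ => (integrable_replacedRowDetSum_sq he β _).const_mul _)
    (fun _ _ => mul_nonneg (hσ _) (sq_nonneg _)) hpt
    (summable_integral_sigma_mul_replacedRowDetSum_sq he he_on β hσsum)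

theorem integral_tsum_sigma_mul_replacedRowDetSum_sq :
    ∫ x, ∑' k, σ (N + k) * replacedRowDetSum e β (N + k) x ^ 2 ∂(Measure.pi fun _ : Fin N => ω)
      = N.factorial * (∑ n : Fin N, β n ^ 2) * ∑' k, σ (N + k) := by
  rw [← integral_tsum_of_summable_integral_norm
    (fun k => (integrable_replacedRowDetSum_sq he β _).const_mul _)]
  · simp_rw [integral_sigma_mul_replacedRowDetSum_sq he he_on β, tsum_mul_right, mul_comm]
  · simpa only [Real.norm_of_nonneg (mul_nonneg (hσ _) (sq_nonneg _))] using
      summable_integral_sigma_mul_replacedRowDetSum_sq he he_on β hσsum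

theorem integral_norm_sub_orthogonalProjectionOnto_sq_mul_det_sq_le {F : Type*}
    [NormedAddCommGroup F] [InnerProductSpace ℝ F] {b : HilbertBasis ℕ ℝ F} {Kf : X → F}
    (hKf : ∀ z m, ⟪b m, Kf z⟫ = √(σ m) * e m z) (hσanti : Antitone σ)
    (hβ : Summable fun m => β m ^ 2) {μ : F} (hμ : ∀ m, ⟪b m, μ⟫ = √(σ m) * β m) :
    ∫ x, ‖μ - (Submodule.orthogonalProjectionOnto
          (Submodule.span ℝ (Set.range fun j => Kf (x j))) μ : F)‖ ^ 2 *
        (evalMatrix e Fin.val x).det ^ 2 ∂(Measure.pi fun _ : Fin N => ω)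
      ≤ N.factorial * (2 * σ N * ∑' m, β m ^ 2 + 2 * (∑ n : Fin N, β n ^ 2) * ∑' k, σ (N + k)) := by
  have hH := integrable_tsum_sigma_mul_replacedRowDetSum_sq he he_on β hσ hσsum fun x : Fin N → X =>
    (hasSum_sigma_mul_replacedRowDetSum_sq β hKf hσ x).summable
  have hdet : Integrable (fun x => (evalMatrix e Fin.val x).det ^ 2)
      (Measure.pi fun _ : Fin N => ω) := by
    simpa only [sq] using integrable_det_evalMatrix_mul_det he Fin.val Fin.val
  have hdet_val : ∫ x, (evalMatrix e Fin.val x).det ^ 2 ∂(Measure.pi fun _ : Fin N => ω)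
      = N.factorial := by
    simpa only [sq, Fintype.card_fin] using
      integral_det_evalMatrix_mul_self he he_on Fin.val_injective
  calc _ ≤ ∫ x, 2 * (σ N * ∑' m, β m ^ 2) * (evalMatrix e Fin.val x).det ^ 2
          + 2 * ∑' k, σ (N + k) * replacedRowDetSum e β (N + k) x ^ 2
          ∂(Measure.pi fun _ : Fin N => ω) := by
        refine integral_mono_of_nonneg (ae_of_all _ fun x => by positivity)
          ((hdet.const_mul _).add (hH.const_mul _)) (ae_of_all _ fun x => ?_)
        refine (norm_sub_orthogonalProjectionOnto_sq_mul_det_sq_le β hKf hσ μ x).trans ?_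
        beta_reduce
        gcongr
        exact norm_sub_truncatedMean_sq_le hσ hσanti hβ hμ
    _ = _ := by
        rw [integral_add (hdet.const_mul _) (hH.const_mul _), integral_const_mul,
          integral_const_mul, hdet_val, integral_tsum_sigma_mul_replacedRowDetSum_sq he he_on β hσ
            hσsum]
        ring

end DPP

theorem stmt0_general {X : Type*} [MeasurableSpace X] (ω : Measure X) [IsProbabilityMeasure ω]
    (e : ℕ → X → ℝ) (he_meas : ∀ m, Measurable (e m))
    (he_on : ∀ m n : ℕ, ∫ z, e m z * e n z ∂ω = if m = n then 1 else 0)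
    (σ : ℕ → ℝ) (hσpos : ∀ m, 0 < σ m) (hσanti : Antitone σ) (hσsum : Summable σ)
    {F : Type*} [NormedAddCommGroup F] [InnerProductSpace ℝ F] [CompleteSpace F]
    (eF : ℕ → F) (heF : Orthonormal ℝ eF)
    (heFtot : (Submodule.span ℝ (Set.range eF)).topologicalClosure = ⊤)
    (Kf : X → F) (hKf : ∀ (z : X) (m : ℕ), ⟪eF m, Kf z⟫ = Real.sqrt (σ m) * e m z)
    (N : ℕ) (hN : 0 < N)
    (g : X → ℝ) (hg_meas : Measurable g)
    (hg2 : Integrable (fun z => (g z) ^ 2) ω)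
    (hgnorm : ∫ z, (g z) ^ 2 ∂ω ≤ 1)
    (μg : F) (hμg : μg = ∑' m : ℕ, (Real.sqrt (σ m) * ∫ z, e m z * g z ∂ω) • eF m)
    (gnorm1 : ℝ) (hgnorm1 : gnorm1 = ∑ n : Fin N, |∫ z, e n.val z * g z ∂ω|)
    (rN : ℝ) (hrN : rN = ∑' m : ℕ, σ (N + m)) :
    (1 / (N.factorial : ℝ)) *
        ∫ x : Fin N → X,
          ‖μg - (Submodule.orthogonalProjectionOnto (Submodule.span ℝ (Set.range fun j => Kf (x j))) μg :
              F)‖ ^ 2 *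
            (Matrix.of fun i j : Fin N => e i.val (x j)).det ^ 2
          ∂(Measure.pi fun _ : Fin N => ω)
      ≤ 2 * σ N + 2 * gnorm1 ^ 2 *
          ((N : ℝ) * rN +
            ∑ ℓ ∈ Finset.Icc 2 N, (σ 0 / (ℓ.factorial : ℝ) ^ 2) * ((N : ℝ) * rN / σ 0) ^ ℓ) := by
  have he : ∀ m, MemLp (e m) 2 ω := fun m =>
    memLp_two_of_integral_mul_self_ne_zero (he_meas m).aestronglyMeasurable
      (by rw [he_on, if_pos rfl]; exact one_ne_zero)
  have hg : MemLp g 2 ω := (memLp_two_iff_integrable_sq hg_meas.aestronglyMeasurable).2 hg2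
  set β : ℕ → ℝ := fun m => ∫ z, e m z * g z ∂ω
  have hβ : Summable fun m => β m ^ 2 := summable_sq_integral_mul he he_on hg
  have hβ1 : ∑' m, β m ^ 2 ≤ 1 := (tsum_sq_integral_mul_le he he_on hg).trans hgnorm
  set b := HilbertBasis.mk heF heFtot.ge
  have hb : ⇑b = eF := HilbertBasis.coe_mk heF heFtot.ge
  have hσ : ∀ m, 0 ≤ σ m := fun m => (hσpos m).le
  have hμ : ∀ m, ⟪b m, μg⟫ = √(σ m) * β m :=
    hμg ▸ hb ▸ b.inner_tsum_smul (summable_sqrt_mul_sq hσ hσanti hβ)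
  have hKf' : ∀ z m, ⟪b m, Kf z⟫ = √(σ m) * e m z := hb ▸ hKf
  have hB : ∑ n : Fin N, β n ^ 2 ≤ gnorm1 ^ 2 := by
    simpa only [hgnorm1, sq_abs] using Finset.sum_sq_le_sq_sum_of_nonneg (s := Finset.univ)
      fun (n : Fin N) _ => abs_nonneg (β n)
  have hrN0 : 0 ≤ rN := hrN ▸ tsum_nonneg fun m => hσ (N + m)
  set S := ∑ ℓ ∈ Finset.Icc 2 N, (σ 0 / (ℓ.factorial : ℝ) ^ 2) * ((N : ℝ) * rN / σ 0) ^ ℓ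
  have hS : 0 ≤ S := Finset.sum_nonneg fun ℓ _ => by have := hσpos 0; positivity
  have hrN_le : rN ≤ N * rN := le_mul_of_one_le_left hrN0 (by exact_mod_cast hN)
  calc _ ≤ 2 * σ N * ∑' m, β m ^ 2 + 2 * (∑ n : Fin N, β n ^ 2) * rN := by
        rw [one_div_mul_eq_div, div_le_iff₀' (by positivity), hrN]
        exact integral_norm_sub_orthogonalProjectionOnto_sq_mul_det_sq_le he he_on β hσ hσsum
          hKf' hσanti hβ hμ
    _ ≤ _ := by
        have h1 : σ N * ∑' m, β m ^ 2 ≤ σ N := mul_le_of_le_one_right (hσ N) hβ1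
        have h2 : (∑ n : Fin N, β n ^ 2) * rN ≤ gnorm1 ^ 2 * rN := by gcongr
        have h3 : gnorm1 ^ 2 * rN ≤ gnorm1 ^ 2 * (N * rN + S) := by gcongr; linarith
        linarith

/-- **Theorem 1 of the paper.** Under the projection DPP with kernel
`∑_{n∈[N]} e_n(x)e_n(y)` and reference measure `dω`, the expected squared approximation
error of the mean element `μ_g` by its orthogonal projection onto `T(x)` is at most
`2 σ_{N+1} + 2 ‖g‖_{dω,1}² (N r_N + ∑_{ℓ=2}^N (σ_1/ℓ!²) (N r_N/σ_1)^ℓ)`.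
(Indices are 0-based: `σ 0` is the paper's `σ_1`, `σ N` is `σ_{N+1}`.) -/
theorem stmt0 {X : Type*} [MeasurableSpace X] (ω : Measure X) [IsProbabilityMeasure ω]
    (e : ℕ → X → ℝ) (he_meas : ∀ m, Measurable (e m))
    (he_on : ∀ m n : ℕ, ∫ z, e m z * e n z ∂ω = if m = n then 1 else 0)
    (σ : ℕ → ℝ) (hσpos : ∀ m, 0 < σ m) (hσanti : Antitone σ) (hσsum : Summable σ)
    (hdiag : ∀ z : X, Summable fun m => σ m * (e m z) ^ 2)
    {F : Type*} [NormedAddCommGroup F] [InnerProductSpace ℝ F] [CompleteSpace F]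
    (eF : ℕ → F) (heF : Orthonormal ℝ eF)
    (heFtot : (Submodule.span ℝ (Set.range eF)).topologicalClosure = ⊤)
    (Kf : X → F) (hKf : ∀ (z : X) (m : ℕ), ⟪eF m, Kf z⟫ = Real.sqrt (σ m) * e m z)
    (N : ℕ) (hN : 0 < N)
    (g : X → ℝ) (hg_meas : Measurable g)
    (hg2 : Integrable (fun z => (g z) ^ 2) ω)
    (hgnorm : ∫ z, (g z) ^ 2 ∂ω ≤ 1)
    (μg : F) (hμg : μg = ∑' m : ℕ, (Real.sqrt (σ m) * ∫ z, e m z * g z ∂ω) • eF m)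
    (gnorm1 : ℝ) (hgnorm1 : gnorm1 = ∑ n : Fin N, |∫ z, e n.val z * g z ∂ω|)
    (rN : ℝ) (hrN : rN = ∑' m : ℕ, σ (N + m)) :
    (1 / (N.factorial : ℝ)) *
        ∫ x : Fin N → X,
          ‖μg - (Submodule.orthogonalProjectionOnto (Submodule.span ℝ (Set.range fun j => Kf (x j))) μg :
              F)‖ ^ 2 *
            (Matrix.of fun i j : Fin N => e i.val (x j)).det ^ 2
          ∂(Measure.pi fun _ : Fin N => ω)
      ≤ 2 * σ N + 2 * gnorm1 ^ 2 *
          ((N : ℝ) * rN +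
            ∑ ℓ ∈ Finset.Icc 2 N, (σ 0 / (ℓ.factorial : ℝ) ^ 2) * ((N : ℝ) * rN / σ 0) ^ ℓ) :=
  stmt0_general ω e he_meas he_on σ hσpos hσanti hσsum eF heF heFtot Kf hKf N hN g hg_meas hg2
    hgnorm μg hμg gnorm1 hgnorm1 rN hrN
end

section
/- Let x = (x_1,…,x_N) ∈ X^N be such that the matrix E(x) = (e_i(x_j))_{i,j∈[N]} is invertible. Then the kernel matrix K(x) = (k(x_i,x_j))_{i,j∈[N]} satisfies det K(x) ≥ (∏_{i=1}^N σ_i) · det(E(x))² > 0; in particular K(x) is invertible. -/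
/-!
Write `φ_m = (e_m(x_j))_j`, so that `K(x) = ∑_m σ_m φ_m φ_mᵀ` is a convergent series of positive
semidefinite rank-one matrices. Its first `N` terms add up to `E(x)ᵀ diag(σ_1, …, σ_N) E(x)`, which is
positive definite with determinant `(∏ σ_i) det(E(x))²`, and the tail is positive semidefinite.
Adding a positive semidefinite matrix to a positive definite one `P = Bᴴ B` does not decrease the
determinant, since `P + Q = Bᴴ (1 + C) B` with `C ⪰ 0` and `det (1 + C) ≥ 1`.
-/

open Matrix
open scoped ComplexOrder

namespace Matrix

theorem sum_smul_vecMulVec_eq {m n R : Type*} [Fintype m] [DecidableEq m] [CommSemiring R]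
    (d : m → R) (B : Matrix m n R) :
    ∑ i, d i • vecMulVec (B i) (B i) = Bᵀ * diagonal d * B := by
  ext j k
  simp [sum_apply, mul_apply, vecMulVec_apply, diagonal, mul_comm, mul_left_comm]

theorem PosSemidef.of_hasSum {ι n 𝕜 : Type*} [Fintype n] [RCLike 𝕜]
    {f : ι → Matrix n n 𝕜} {A : Matrix n n 𝕜}
    (hf : HasSum f A) (hpos : ∀ i, (f i).PosSemidef) : A.PosSemidef := by
  refine .of_dotProduct_mulVec_nonneg ?_ fun v => ?_
  · refine hf.matrix_conjTranspose.unique ?_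
    simpa only [(hpos _).isHermitian.eq] using hf
  · have hq : HasSum (fun i => star v ⬝ᵥ (f i *ᵥ v)) (star v ⬝ᵥ (A *ᵥ v)) :=
      hf.map (AddMonoidHom.mk' (fun M : Matrix n n 𝕜 => star v ⬝ᵥ (M *ᵥ v))
        fun M N => by simp only [add_mulVec, dotProduct_add])
        (continuous_const.dotProduct (continuous_id.matrix_mulVec continuous_const))
    exact hq.nonneg fun i => (hpos i).dotProduct_mulVec_nonneg v

variable {n : Type*} [Fintype n] [DecidableEq n]

theorem PosSemidef.one_le_det_one_add {C : Matrix n n ℝ} (hC : C.PosSemidef) :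
    1 ≤ (1 + C).det := by
  have hdiag : 1 + C = Unitary.conjStarAlgAut ℝ _ hC.isHermitian.eigenvectorUnitary
      (diagonal fun i => 1 + hC.isHermitian.eigenvalues i) := by
    conv_lhs => rw [hC.isHermitian.spectral_theorem]
    rw [← map_one (Unitary.conjStarAlgAut ℝ _ hC.isHermitian.eigenvectorUnitary), ← map_add,
      ← diagonal_one, diagonal_add]
    rfl
  rw [hdiag, Unitary.conjStarAlgAut_apply, det_mul_comm, ← mul_assoc, Unitary.coe_star_mul_self,
    one_mul, det_diagonal]
  exact Finset.one_le_prod fun i _ => le_add_of_nonneg_right (hC.eigenvalues_nonneg i)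

theorem PosDef.det_le_det_add {P Q : Matrix n n ℝ} (hP : P.PosDef) (hQ : Q.PosSemidef) :
    P.det ≤ (P + Q).det := by
  open scoped MatrixOrder in
  obtain ⟨B, hB, rfl⟩ := CStarAlgebra.isStrictlyPositive_iff_eq_star_mul_self.mp
    hP.isStrictlyPositive
  have hBdet : IsUnit B.det := (isUnit_iff_isUnit_det B).mp hB
  set C := (B⁻¹)ᴴ * Q * B⁻¹
  have hBC : star B * B + Q = Bᴴ * (1 + C) * B := by
    simp only [C, mul_add, add_mul, mul_one, mul_assoc, nonsing_inv_mul _ hBdet]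
    simp only [← mul_assoc, ← conjTranspose_mul, nonsing_inv_mul _ hBdet, conjTranspose_one,
      one_mul, star_eq_conjTranspose]
  calc (star B * B).det = B.det ^ 2 := by
        rw [det_mul, star_eq_conjTranspose, det_conjTranspose, star_trivial, sq]
    _ ≤ B.det ^ 2 * (1 + C).det :=
        le_mul_of_one_le_right (sq_nonneg _) (hQ.conjTranspose_mul_mul_same B⁻¹).one_le_det_one_add
    _ = (star B * B + Q).det := by
        rw [hBC, det_mul, det_mul, det_conjTranspose, star_trivial]
        ring

theorem det_sum_range_le_of_hasSum {f : ℕ → Matrix n n ℝ} {A : Matrix n n ℝ} (hf : HasSum f A)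
    (hpos : ∀ m, (f m).PosSemidef) (N : ℕ) (hN : (∑ m ∈ Finset.range N, f m).PosDef) :
    (∑ m ∈ Finset.range N, f m).det ≤ A.det := by
  have htail : (∑' m, f (m + N)).PosSemidef :=
    .of_hasSum ((summable_nat_add_iff N).2 hf.summable).hasSum fun m => hpos (m + N)
  rw [← hf.tsum_eq, ← hf.summable.sum_add_tsum_nat_add N]
  exact hN.det_le_det_add htail

end Matrix

theorem stmt1_general {X : Type*} (N : ℕ)
    (e : ℕ → X → ℝ) (σ : ℕ → ℝ)
    (hσpos : ∀ m, 0 < σ m)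
    (habs : ∀ x y : X, Summable fun m => |σ m * e m x * e m y|)
    (k : X → X → ℝ) (hk : ∀ x y, k x y = ∑' m, σ m * e m x * e m y)
    (x : Fin N → X)
    (E : Matrix (Fin N) (Fin N) ℝ) (hE : E = Matrix.of fun i j : Fin N => e i.val (x j))
    (K : Matrix (Fin N) (Fin N) ℝ) (hK : K = Matrix.of fun i j : Fin N => k (x i) (x j))
    (hEinv : IsUnit E) :
    (∏ i : Fin N, σ i.val) * E.det ^ 2 ≤ K.det ∧
    0 < (∏ i : Fin N, σ i.val) * E.det ^ 2 ∧
    IsUnit K := by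
  set f : ℕ → Matrix (Fin N) (Fin N) ℝ :=
    fun m => σ m • vecMulVec (fun i => e m (x i)) (fun i => e m (x i))
  have hf : HasSum f K := by
    subst hK
    refine Pi.hasSum.2 fun i => Pi.hasSum.2 fun j => ?_
    simpa [f, hk, vecMulVec_apply, mul_assoc] using ((habs (x i) (x j)).of_abs).hasSum
  have hhead : ∑ m ∈ Finset.range N, f m = Eᵀ * diagonal (fun i : Fin N => σ i) * E := by
    rw [← Fin.sum_univ_eq_sum_range, ← sum_smul_vecMulVec_eq, hE]
    rfl
  have hP : (∑ m ∈ Finset.range N, f m).PosDef := by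
    rw [hhead, ← conjTranspose_eq_transpose_of_trivial]
    exact (PosDef.diagonal fun i : Fin N => hσpos i).conjTranspose_mul_mul_same
      (mulVec_injective_iff_isUnit.2 hEinv)
  have hdet : (∑ m ∈ Finset.range N, f m).det = (∏ i : Fin N, σ i.val) * E.det ^ 2 := by
    rw [hhead, det_mul, det_mul, det_transpose, det_diagonal]
    ring
  have hle : (∏ i : Fin N, σ i.val) * E.det ^ 2 ≤ K.det :=
    hdet ▸ det_sum_range_le_of_hasSum hf
      (fun m => (posSemidef_vecMulVec_self_star _).smul (hσpos m).le) N hP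
  have hpos : 0 < (∏ i : Fin N, σ i.val) * E.det ^ 2 := hdet ▸ hP.det_pos
  exact ⟨hle, hpos, (isUnit_iff_isUnit_det K).2 (hpos.trans_le hle).ne'.isUnit⟩

/-- If the matrix `E(x) = (e_i(x_j))` is invertible, then the kernel matrix
`K(x) = (k(x_i,x_j))`, where `k(x,y) = ∑ σ_m e_m(x) e_m(y)`, satisfies
`det K(x) ≥ (∏ σ_i) · det(E(x))² > 0`; in particular `K(x)` is invertible. -/
theorem stmt1 {X : Type*} (N : ℕ)
    (e : ℕ → X → ℝ) (σ : ℕ → ℝ)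
    (hσpos : ∀ m, 0 < σ m) (hσanti : Antitone σ) (hσsum : Summable σ)
    (hdiag : ∀ x : X, Summable fun m => σ m * (e m x) ^ 2)
    (habs : ∀ x y : X, Summable fun m => |σ m * e m x * e m y|)
    (k : X → X → ℝ) (hk : ∀ x y, k x y = ∑' m, σ m * e m x * e m y)
    (x : Fin N → X)
    (E : Matrix (Fin N) (Fin N) ℝ) (hE : E = Matrix.of fun i j : Fin N => e i.val (x j))
    (K : Matrix (Fin N) (Fin N) ℝ) (hK : K = Matrix.of fun i j : Fin N => k (x i) (x j))
    (hEinv : IsUnit E) :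
    (∏ i : Fin N, σ i.val) * E.det ^ 2 ≤ K.det ∧
    0 < (∏ i : Fin N, σ i.val) * E.det ^ 2 ∧
    IsUnit K :=
  stmt1_general N e σ hσpos habs k hk x E hE K hK hEinv
end

section
/- Let x = (x_1,…,x_N) ∈ X^N with det E(x) ≠ 0, and let E_N^F := span{e_1^F,…,e_N^F} ⊆ F. Then all principal cosines between T(x) and E_N^F are positive, and max_{n∈[N]} ‖Π_{T(x)^⊥} e_n^F‖_F² ≤ 1/cos²θ_N(T(x), E_N^F) − 1 ≤ ∏_{n=1}^N 1/cos²θ_n(T(x), E_N^F) − 1. -/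
/-!
Write `W` for the cross-Gram matrix of orthonormal bases of `T(x)` and `E_N^F`. Expanding the
`k(x_j, ·)` in the features, the cross-Gram matrix of the `k(x_j, ·)` against `e_1^F, …, e_N^F` is
`diag(√σ) E(x)`, which is invertible; comparing the two factorisations of the cross-Gram matrix of
`T(x)`'s generators against `E_N^F`'s basis shows that `W` is invertible. Hence `W Wᵀ` is positive
definite, and Bessel's inequality gives `W Wᵀ ≤ 1`, so every `cos²θ_i` lies in `(0, 1]`.
If `y` is the coordinate vector of `e_n^F` in the basis of `E_N^F`, then
`‖Π_{T(x)} e_n^F‖² ≥ |W y|² ≥ λ_min(Wᵀ W) = cos²θ_N`, because `Wᵀ W` and `W Wᵀ` have the same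
characteristic polynomial. Pythagoras and `1 - c ≤ 1/c - 1` give the first bound, and
`1/cos²θ_i ≥ 1` the second.
-/

open scoped RealInnerProductSpace BigOperators Matrix


open Matrix Polynomial
open scoped MatrixOrder

section Spectrum

variable {n : Type*} [Fintype n] [DecidableEq n]

theorem Matrix.spectrum_eq_range_of_charpoly_eq_prod {K : Type*} [Field K] {A : Matrix n n K}
    {c : n → K} (h : A.charpoly = ∏ i, (X - C (c i))) : spectrum K A = Set.range c := by
  ext t
  rw [mem_spectrum_iff_isRoot_charpoly, h, IsRoot, eval_prod, Finset.prod_eq_zero_iff]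
  simp [sub_eq_zero, eq_comm]

theorem Matrix.IsHermitian.mul_dotProduct_le_dotProduct_mulVec {A : Matrix n n ℝ}
    (hA : A.IsHermitian) {r : ℝ} (hr : ∀ t ∈ spectrum ℝ A, r ≤ t) (y : n → ℝ) :
    r * (y ⬝ᵥ y) ≤ y ⬝ᵥ (A *ᵥ y) := by
  have hle : algebraMap ℝ _ r ≤ A := (algebraMap_le_iff_le_spectrum hA).2 hr
  have := (Matrix.le_iff.1 hle).dotProduct_mulVec_nonneg y
  simpa [Algebra.algebraMap_eq_smul_one, sub_mulVec, dotProduct_sub, smul_mulVec] using this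

theorem Matrix.IsHermitian.le_one_of_mem_spectrum {A : Matrix n n ℝ} (hA : A.IsHermitian)
    (h : ∀ y, y ⬝ᵥ (A *ᵥ y) ≤ y ⬝ᵥ y) {t : ℝ} (ht : t ∈ spectrum ℝ A) : t ≤ 1 := by
  have hle : A ≤ algebraMap ℝ _ 1 := by
    refine Matrix.le_iff.2 (.of_dotProduct_mulVec_nonneg (by simpa using isHermitian_one.sub hA)
      fun y => ?_)
    simpa [sub_mulVec, dotProduct_sub] using h y
  exact (le_algebraMap_iff_spectrum_le hA).1 hle t ht

theorem Matrix.PosDef.pos_of_mem_spectrum {A : Matrix n n ℝ} (hA : A.PosDef) {t : ℝ}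
    (ht : t ∈ spectrum ℝ A) : 0 < t := by
  rw [hA.isHermitian.spectrum_real_eq_range_eigenvalues] at ht
  obtain ⟨i, rfl⟩ := ht
  exact hA.eigenvalues_pos i

end Spectrum

section CrossGram

variable {F : Type*} [NormedAddCommGroup F] [InnerProductSpace ℝ F] {ι κ μ : Type*}

def crossGram (u : ι → F) (v : κ → F) : Matrix ι κ ℝ :=
  of fun i j => ⟪u i, v j⟫

@[simp] theorem crossGram_apply (u : ι → F) (v : κ → F) (i : ι) (j : κ) :
    crossGram u v i j = ⟪u i, v j⟫ :=
  rfl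

theorem crossGram_transpose (u : ι → F) (v : κ → F) : (crossGram u v)ᵀ = crossGram v u := by
  ext i j
  simp [real_inner_comm]

theorem Orthonormal.crossGram_self [DecidableEq ι] {u : ι → F} (hu : Orthonormal ℝ u) :
    crossGram u u = 1 := by
  ext i j
  simp [orthonormal_iff_ite.1 hu, one_apply]

variable [Fintype κ] {v : κ → F}

theorem Orthonormal.inner_eq_sum_inner_mul_inner (hv : Orthonormal ℝ v) {w : F}
    (hw : w ∈ Submodule.span ℝ (Set.range v)) (a : F) :
    ⟪a, w⟫ = ∑ j, ⟪a, v j⟫ * ⟪v j, w⟫ := by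
  obtain ⟨l, rfl⟩ := (Submodule.mem_span_range_iff_exists_fun ℝ).1 hw
  simp_rw [hv.inner_right_fintype, inner_sum, real_inner_smul_right, mul_comm]

theorem crossGram_mul_crossGram (hv : Orthonormal ℝ v) (u : ι → F) {w : μ → F}
    (hw : ∀ k, w k ∈ Submodule.span ℝ (Set.range v)) :
    crossGram u v * crossGram v w = crossGram u w := by
  ext i k
  rw [mul_apply, crossGram_apply, hv.inner_eq_sum_inner_mul_inner (hw k)]
  rfl

theorem crossGram_mul_crossGram_of_mem_span_left (hv : Orthonormal ℝ v) {u : ι → F}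
    (hu : ∀ i, u i ∈ Submodule.span ℝ (Set.range v)) (w : μ → F) :
    crossGram u v * crossGram v w = crossGram u w := by
  rw [← transpose_inj, transpose_mul, crossGram_transpose, crossGram_transpose,
    crossGram_transpose, crossGram_mul_crossGram hv w hu]

theorem crossGram_mulVec_inner (hv : Orthonormal ℝ v) (u : ι → F) {w : F}
    (hw : w ∈ Submodule.span ℝ (Set.range v)) :
    crossGram u v *ᵥ (fun j => ⟪v j, w⟫) = fun i => ⟪u i, w⟫ := by
  ext i
  rw [hv.inner_eq_sum_inner_mul_inner hw]
  rfl

theorem Orthonormal.dotProduct_inner_self (hv : Orthonormal ℝ v) {w : F}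
    (hw : w ∈ Submodule.span ℝ (Set.range v)) :
    (fun j => ⟪v j, w⟫) ⬝ᵥ (fun j => ⟪v j, w⟫) = ‖w‖ ^ 2 := by
  rw [← real_inner_self_eq_norm_sq, hv.inner_eq_sum_inner_mul_inner hw w]
  simp only [dotProduct, real_inner_comm w]

theorem crossGram_mulVec_dotProduct_le [Fintype ι] {u : ι → F} (hu : Orthonormal ℝ u)
    (hv : Orthonormal ℝ v) (z : ι → ℝ) :
    (crossGram v u *ᵥ z) ⬝ᵥ (crossGram v u *ᵥ z) ≤ z ⬝ᵥ z := by
  set s := ∑ i, z i • u i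
  have hcoord : crossGram v u *ᵥ z = fun j => ⟪v j, s⟫ := by
    ext j
    simp [s, mulVec, dotProduct, inner_sum, real_inner_smul_right, mul_comm]
  have hnorm : ‖s‖ ^ 2 = z ⬝ᵥ z := by
    rw [← real_inner_self_eq_norm_sq]
    simp only [s, dotProduct, sum_inner, real_inner_smul_left, hu.inner_right_fintype]
  calc (crossGram v u *ᵥ z) ⬝ᵥ (crossGram v u *ᵥ z) = ∑ j, ‖⟪v j, s⟫‖ ^ 2 := by
        simp [hcoord, dotProduct, sq]
    _ ≤ ‖s‖ ^ 2 := hv.sum_inner_products_le s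
    _ = z ⬝ᵥ z := hnorm

end CrossGram

theorem Orthonormal.norm_sq_orthogonalProjection_orthogonal_le {F ι : Type*}
    [NormedAddCommGroup F] [InnerProductSpace ℝ F] [Fintype ι] {u : ι → F} (hu : Orthonormal ℝ u)
    {T : Submodule ℝ F} [T.HasOrthogonalProjection] (huT : ∀ i, u i ∈ T) (w : F) :
    ‖(Tᗮ.orthogonalProjectionOnto w : F)‖ ^ 2 ≤ ‖w‖ ^ 2 - ∑ i, ⟪u i, w⟫ ^ 2 := by
  have hbessel := hu.sum_inner_products_le (T.orthogonalProjectionOnto w : F) (s := .univ)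
  have hinner (i : ι) : ⟪u i, (T.orthogonalProjectionOnto w : F)⟫ = ⟪u i, w⟫ :=
    (T.coe_inner _ _).symm.trans (T.inner_orthogonalProjectionOnto_eq_of_mem_left ⟨u i, huT i⟩ w)
  simp only [hinner, Real.norm_eq_abs, sq_abs] at hbessel
  have := T.norm_sq_eq_add_norm_sq_projection w
  simp only [Submodule.coe_norm] at this
  linarith

section PrincipalCosines

variable {F : Type*} [NormedAddCommGroup F] [InnerProductSpace ℝ F]
  {ι : Type*} [Fintype ι] [DecidableEq ι] {u v : ι → F}

theorem crossGram_cosines_mem_Ioc (hu : Orthonormal ℝ u) (hv : Orthonormal ℝ v)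
    (hdet : (crossGram u v).det ≠ 0) {c : ι → ℝ}
    (hc : (crossGram u v * (crossGram u v)ᵀ).charpoly = ∏ i, (X - C (c i))) (i : ι) :
    c i ∈ Set.Ioc 0 1 := by
  set W := crossGram u v
  have hspec : c i ∈ spectrum ℝ (W * Wᵀ) := by
    rw [spectrum_eq_range_of_charpoly_eq_prod hc]
    exact ⟨i, rfl⟩
  have hpos : (W * Wᵀ).PosDef := by
    simpa using PosDef.mul_conjTranspose_self W
      (vecMul_injective_iff_isUnit.2 (isUnit_iff_isUnit_det W |>.2 hdet.isUnit))
  refine ⟨hpos.pos_of_mem_spectrum hspec,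
    hpos.isHermitian.le_one_of_mem_spectrum (fun y => ?_) hspec⟩
  rw [← mulVec_mulVec, dotProduct_mulVec, ← mulVec_transpose, crossGram_transpose]
  exact crossGram_mulVec_dotProduct_le hu hv y

theorem mul_norm_sq_le_sum_inner_sq (hv : Orthonormal ℝ v) {c : ι → ℝ}
    (hc : (crossGram u v * (crossGram u v)ᵀ).charpoly = ∏ i, (X - C (c i))) {r : ℝ}
    (hr : ∀ i, r ≤ c i) {w : F} (hw : w ∈ Submodule.span ℝ (Set.range v)) :
    r * ‖w‖ ^ 2 ≤ ∑ i, ⟪u i, w⟫ ^ 2 := by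
  set W := crossGram u v
  have hspec : spectrum ℝ (Wᵀ * W) = Set.range c :=
    spectrum_eq_range_of_charpoly_eq_prod (by rw [charpoly_mul_comm, hc])
  have hherm : (Wᵀ * W).IsHermitian := by simpa using isHermitian_conjTranspose_mul_self W
  have := hherm.mul_dotProduct_le_dotProduct_mulVec (r := r)
    (by rw [hspec]; rintro _ ⟨i, rfl⟩; exact hr i) (fun j => ⟪v j, w⟫)
  rw [hv.dotProduct_inner_self hw, ← mulVec_mulVec, dotProduct_mulVec, vecMul_transpose,
    crossGram_mulVec_inner hv u hw] at this
  simpa [dotProduct, sq] using this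

end PrincipalCosines

theorem det_crossGram_ne_zero_of_mem_span {F ι : Type*} [NormedAddCommGroup F]
    [InnerProductSpace ℝ F] [Fintype ι] [DecidableEq ι] {u v f k : ι → F}
    (hu : Orthonormal ℝ u) (hv : Orthonormal ℝ v) (hf : Orthonormal ℝ f)
    (hk : ∀ j, k j ∈ Submodule.span ℝ (Set.range u))
    (hvf : ∀ j, v j ∈ Submodule.span ℝ (Set.range f)) (hfk : (crossGram f k).det ≠ 0) :
    (crossGram u v).det ≠ 0 := by
  have hfactor : crossGram v u * crossGram u k = crossGram v f * crossGram f k := by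
    rw [crossGram_mul_crossGram hu v hk, crossGram_mul_crossGram_of_mem_span_left hf hvf]
  have hvf_inv : crossGram v f * crossGram f v = 1 := by
    rw [crossGram_mul_crossGram_of_mem_span_left hf hvf, hv.crossGram_self]
  have hvf_det : (crossGram v f).det ≠ 0 :=
    left_ne_zero_of_mul_eq_one (by rw [← det_mul, hvf_inv, det_one])
  rw [← det_transpose, crossGram_transpose]
  refine left_ne_zero_of_mul (b := (crossGram u k).det) ?_
  rw [← det_mul, hfactor, det_mul]
  exact mul_ne_zero hvf_det hfk

theorem det_crossGram_features_ne_zero {X F : Type*} [NormedAddCommGroup F]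
    [InnerProductSpace ℝ F] {e : ℕ → X → ℝ} {σ : ℕ → ℝ} (hσpos : ∀ m, 0 < σ m) {eF : ℕ → F}
    {Kf : X → F} (hKf : ∀ (z : X) (m : ℕ), ⟪eF m, Kf z⟫ = Real.sqrt (σ m) * e m z) {N : ℕ}
    {x : Fin N → X} (hEdet : (Matrix.of fun i j : Fin N => e i.val (x j)).det ≠ 0) :
    (crossGram (fun n : Fin N => eF n) fun j => Kf (x j)).det ≠ 0 := by
  have hfactor : crossGram (fun n : Fin N => eF n) (fun j => Kf (x j))
      = diagonal (fun m : Fin N => Real.sqrt (σ m)) * of fun i j : Fin N => e i.val (x j) := by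
    ext m j
    simp [hKf, diagonal_mul]
  rw [hfactor, det_mul, det_diagonal]
  exact mul_ne_zero (Finset.prod_ne_zero_iff.2 fun m _ => (Real.sqrt_pos.2 (hσpos m)).ne') hEdet

theorem one_sub_le_one_div_sub_one {c : ℝ} (hc : 0 < c) : 1 - c ≤ 1 / c - 1 := by
  have h : 1 / c - 1 - (1 - c) = (1 - c) ^ 2 / c := by
    field_simp
  linarith [div_nonneg (sq_nonneg (1 - c)) hc.le]

theorem one_div_le_prod_one_div {ι : Type*} [Fintype ι] {c : ι → ℝ}
    (hc : ∀ i, c i ∈ Set.Ioc 0 1) (a : ι) : 1 / c a ≤ ∏ i, 1 / c i := by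
  simpa using Finset.prod_le_prod_of_subset_of_one_le (Finset.subset_univ {a})
    (by simp [(hc a).1.le]) fun i _ _ => one_le_one_div (hc i).1 (hc i).2

/-- `c` enumerates the squared principal cosines `cos²θ_i` in nonincreasing order, 0-based, so
`c ⟨N - 1, _⟩` is `cos²θ_N`. -/
theorem stmt4_general {X : Type*}
    (e : ℕ → X → ℝ) (σ : ℕ → ℝ)
    (hσpos : ∀ m, 0 < σ m)
    {F : Type*} [NormedAddCommGroup F] [InnerProductSpace ℝ F]
    (eF : ℕ → F) (heF : Orthonormal ℝ eF)
    (Kf : X → F) (hKf : ∀ (z : X) (m : ℕ), ⟪eF m, Kf z⟫ = Real.sqrt (σ m) * e m z)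
    (N : ℕ) (hN : 0 < N) (x : Fin N → X)
    (hEdet : (Matrix.of fun i j : Fin N => e i.val (x j)).det ≠ 0)
    (u v : Fin N → F) (hu : Orthonormal ℝ u) (hv : Orthonormal ℝ v)
    (huT : Submodule.span ℝ (Set.range u) = Submodule.span ℝ (Set.range fun j => Kf (x j)))
    (hvE : Submodule.span ℝ (Set.range v)
      = Submodule.span ℝ (Set.range fun n : Fin N => eF n.val))
    (W : Matrix (Fin N) (Fin N) ℝ) (hW : W = Matrix.of fun i j : Fin N => ⟪u i, v j⟫)
    (c : Fin N → ℝ) (hc : Antitone c)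
    (hchar : (W * Wᵀ).charpoly = ∏ i : Fin N, (Polynomial.X - Polynomial.C (c i))) :
    (∀ i : Fin N, 0 < c i) ∧
    (Finset.univ.sup' (Finset.univ_nonempty_iff.mpr ⟨⟨0, hN⟩⟩)
        (fun n : Fin N =>
          ‖(Submodule.orthogonalProjection (Submodule.span ℝ (Set.range fun j => Kf (x j)))ᗮ
              (eF n.val) : F)‖ ^ 2)
      ≤ 1 / c ⟨N - 1, Nat.sub_lt hN one_pos⟩ - 1) ∧
    1 / c ⟨N - 1, Nat.sub_lt hN one_pos⟩ - 1 ≤ (∏ i : Fin N, 1 / c i) - 1 := by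
  subst hW
  set eN : Fin N → F := fun n => eF n.val
  set cmin := c ⟨N - 1, Nat.sub_lt hN one_pos⟩
  have heN : Orthonormal ℝ eN := heF.comp _ Fin.val_injective
  have huK (i : Fin N) : u i ∈ Submodule.span ℝ (Set.range fun j => Kf (x j)) :=
    huT ▸ Submodule.subset_span ⟨i, rfl⟩
  have hKu (j : Fin N) : Kf (x j) ∈ Submodule.span ℝ (Set.range u) :=
    huT ▸ Submodule.subset_span ⟨j, rfl⟩
  have hvE' (j : Fin N) : v j ∈ Submodule.span ℝ (Set.range eN) :=
    hvE ▸ Submodule.subset_span ⟨j, rfl⟩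
  have hEv (n : Fin N) : eN n ∈ Submodule.span ℝ (Set.range v) :=
    hvE ▸ Submodule.subset_span ⟨n, rfl⟩
  have hdet : (crossGram u v).det ≠ 0 := det_crossGram_ne_zero_of_mem_span hu hv heN hKu hvE'
    (det_crossGram_features_ne_zero hσpos hKf hEdet)
  have hcos := crossGram_cosines_mem_Ioc hu hv hdet hchar
  have hmin (i : Fin N) : cmin ≤ c i := hc (Fin.le_def.2 (Nat.le_pred_of_lt i.isLt))
  refine ⟨fun i => (hcos i).1, Finset.sup'_le _ _ fun n _ => ?_, ?_⟩
  · have hlower := mul_norm_sq_le_sum_inner_sq hv hchar hmin (hEv n)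
    rw [heN.1 n, one_pow, mul_one] at hlower
    calc _ ≤ ‖eN n‖ ^ 2 - ∑ i, ⟪u i, eN n⟫ ^ 2 :=
          hu.norm_sq_orthogonalProjection_orthogonal_le huK (eN n)
      _ ≤ 1 - cmin := by rw [heN.1 n]; linarith
      _ ≤ 1 / cmin - 1 := one_sub_le_one_div_sub_one (hcos _).1
  · linarith [one_div_le_prod_one_div hcos ⟨N - 1, Nat.sub_lt hN one_pos⟩]

/-- **Lemma 2 of the paper.** If `det E(x) ≠ 0` then all principal cosines
between `T(x)` and `E_N^F` are positive and
`max_{n∈[N]} ‖Π_{T(x)^⊥} e_n^F‖² ≤ 1/cos²θ_N − 1 ≤ ∏_{n∈[N]} 1/cos²θ_n − 1`.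
The squared principal cosines are encoded as any nonincreasing enumeration `c` of the
eigenvalues of `W Wᵀ`, `W` a cross-Gram matrix of orthonormal bases of the two subspaces;
`c ⟨N-1,·⟩` is the smallest one, `cos²θ_N`. Indices are 0-based. -/
theorem stmt4 {X : Type*}
    (e : ℕ → X → ℝ) (σ : ℕ → ℝ)
    (hσpos : ∀ m, 0 < σ m) (hσanti : Antitone σ) (hσsum : Summable σ)
    (hdiag : ∀ z : X, Summable fun m => σ m * (e m z) ^ 2)
    {F : Type*} [NormedAddCommGroup F] [InnerProductSpace ℝ F] [CompleteSpace F]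
    (eF : ℕ → F) (heF : Orthonormal ℝ eF)
    (Kf : X → F) (hKf : ∀ (z : X) (m : ℕ), ⟪eF m, Kf z⟫ = Real.sqrt (σ m) * e m z)
    (N : ℕ) (hN : 0 < N) (x : Fin N → X)
    (hEdet : (Matrix.of fun i j : Fin N => e i.val (x j)).det ≠ 0)
    (u v : Fin N → F) (hu : Orthonormal ℝ u) (hv : Orthonormal ℝ v)
    (huT : Submodule.span ℝ (Set.range u) = Submodule.span ℝ (Set.range fun j => Kf (x j)))
    (hvE : Submodule.span ℝ (Set.range v)
      = Submodule.span ℝ (Set.range fun n : Fin N => eF n.val))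
    (W : Matrix (Fin N) (Fin N) ℝ) (hW : W = Matrix.of fun i j : Fin N => ⟪u i, v j⟫)
    (c : Fin N → ℝ) (hc : Antitone c)
    (hchar : (W * Wᵀ).charpoly = ∏ i : Fin N, (Polynomial.X - Polynomial.C (c i))) :
    (∀ i : Fin N, 0 < c i) ∧
    (Finset.univ.sup' (Finset.univ_nonempty_iff.mpr ⟨⟨0, hN⟩⟩)
        (fun n : Fin N =>
          ‖(Submodule.orthogonalProjection (Submodule.span ℝ (Set.range fun j => Kf (x j)))ᗮ
              (eF n.val) : F)‖ ^ 2)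
      ≤ 1 / c ⟨N - 1, Nat.sub_lt hN one_pos⟩ - 1) ∧
    1 / c ⟨N - 1, Nat.sub_lt hN one_pos⟩ - 1 ≤ (∏ i : Fin N, 1 / c i) - 1 :=
  stmt4_general e σ hσpos eF heF Kf hKf N hN x hEdet u v hu hv huT hvE W hW c hc hchar
end

section
/- Let (e_m)_{m≥1} be an orthonormal family in L²(dω), (σ_m)_{m≥1} a summable sequence of nonnegative reals, and k(x,y) = ∑_{m≥1} σ_m e_m(x) e_m(y) (pointwise absolutely convergent). Then for every N ≥ 1, (1/N!) ∫_{X^N} det( (k(x_i,x_j))_{i,j∈[N]} ) dω(x_1)⋯dω(x_N) = ∑_{T ⊂ ℕ*, |T| = N} ∏_{t∈T} σ_t, where the sum on the right is over all N-element subsets of ℕ* = {1,2,…} and is finite. -/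
/-!
Expanding every entry `k (x a) (x b) = ∑' m, σ m * e m (x a) * e m (x b)` and using that the
determinant is multilinear in the columns gives, pointwise,
`det (k (x a) (x b)) = ∑' f : Fin N → ℕ, (∏ b, σ (f b)) * det (e (f b) (x a) * e (f b) (x b))`,
and the series still converges absolutely after integration, with bound
`N! * (∑' m, |σ m|) ^ N`. By Fubini the integral of each determinant on the right is the
determinant of the Gram matrix `∫ e (f a) * e (f b) = [f a = f b]`, which is `1` if `f` is
injective and `0` otherwise. Injective maps `Fin N → ℕ` are exactly the increasing enumerations
of `N`-element sets composed with permutations of `Fin N`, which produces the factor `N!`.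
-/

open MeasureTheory

theorem summable_norm_prod_and_hasSum_prod_tsum {ι β R : Type*} [Fintype ι] [NormedCommRing R]
    [CompleteSpace R] (f : ι → β → R) (hf : ∀ i, Summable fun j => ‖f i j‖) :
    Summable (fun x : ι → β => ‖∏ i, f i (x i)‖) ∧
      HasSum (fun x : ι → β => ∏ i, f i (x i)) (∏ i, ∑' j, f i j) := by
  suffices H : ∀ (α : Type _) [Fintype α] (g : α → β → R), (∀ i, Summable fun j => ‖g i j‖) →
      Summable (fun x : α → β => ‖∏ i, g i (x i)‖) ∧
        HasSum (fun x : α → β => ∏ i, g i (x i)) (∏ i, ∑' j, g i j) from H ι f hf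
  refine Fintype.induction_empty_option ?_ ?_ ?_
  · intro α γ _ e ih f hf
    let _ : Fintype α := Fintype.ofEquiv γ e.symm
    obtain ⟨hs, hsum⟩ := ih (fun a => f (e a)) (fun a => hf (e a))
    let E : (α → β) ≃ (γ → β) := e.arrowCongr (Equiv.refl β)
    have hE (x : α → β) : ∏ c, f c (E x c) = ∏ a, f (e a) (x a) := by
      rw [← e.prod_comp]
      simp [E]
    rw [← e.prod_comp]
    refine ⟨E.summable_iff.mp ?_, E.hasSum_iff.mp ?_⟩
    · simpa only [Function.comp_def, hE] using hs
    · simpa only [Function.comp_def, hE] using hsum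
  · intro f _
    exact ⟨.of_finite, by simp⟩
  · intro α _ ih f hf
    obtain ⟨hs, hsum⟩ := ih (fun a => f (some a)) (fun a => hf (some a))
    let E : β × (α → β) ≃ (Option α → β) := (Equiv.piOptionEquivProd (β := fun _ => β)).symm
    have hE (p : β × (α → β)) : ∏ o, f o (E p o) = f none p.1 * ∏ a, f (some a) (p.2 a) := by
      simp [E, Fintype.prod_option]
    rw [Fintype.prod_option, ← hsum.tsum_eq, tsum_mul_tsum_of_summable_norm (hf none) hs]
    refine ⟨E.summable_iff.mp ?_, E.hasSum_iff.mp ?_⟩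
    · simpa only [Function.comp_def, hE] using (hf none).mul_norm hs
    · simpa only [Function.comp_def, hE] using
        (summable_mul_of_summable_norm (hf none) hs).hasSum

theorem Finset.prod_comp_perm_mul {ι X M : Type*} [Fintype ι] [CommMonoid M]
    (π : Equiv.Perm ι) (u v : ι → X → M) (x : ι → X) :
    ∏ i, u i (x (π i)) * v i (x i) = ∏ j, u (π.symm j) (x j) * v j (x j) := by
  rw [prod_mul_distrib, prod_mul_distrib, ← Equiv.prod_comp π fun j => u (π.symm j) (x j)]
  simp

namespace Matrix

variable {n R : Type*} [Fintype n] [DecidableEq n]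

theorem hasSum_det_of_tsum {β : Type*} [NormedCommRing R] [CompleteSpace R]
    (A : β → Matrix n n R) (hA : ∀ i j, Summable fun m => ‖A m i j‖) :
    HasSum (fun f : n → β => (of fun i j => A (f j) i j).det)
      (of fun i j => ∑' m, A m i j).det := by
  simp only [det_apply']
  exact hasSum_sum fun π _ =>
    (summable_norm_prod_and_hasSum_prod_tsum (fun j m => A m (π j) j) fun j => hA _ _).2.mul_left _

theorem det_of_ite_eq {α : Type*} [CommRing R] [DecidableEq α] (f : n → α) :
    (of fun i j => if f i = f j then (1 : R) else 0).det =
      if Function.Injective f then 1 else 0 := by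
  split_ifs with hf
  · convert det_one (R := R) (n := n)
    ext i j
    simp [hf.eq_iff, one_apply]
  · obtain ⟨i, j, hfij, hij⟩ := Function.not_injective_iff.mp hf
    exact det_zero_of_row_eq hij (funext fun k => by simp [hfij])

theorem det_of_mul_apply {X : Type*} [CommRing R] (u v : n → X → R) (x : n → X) :
    (of fun a b => u b (x a) * v b (x b)).det =
      ∑ π : Equiv.Perm n, (Equiv.Perm.sign π : R) * ∏ i, u i (x (π i)) * v i (x i) :=
  det_apply' _

end Matrix

section PiIntegral

variable {ι X : Type*} [Fintype ι] [MeasurableSpace X] {μ : Measure X} [SigmaFinite μ]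

theorem integrable_prod_comp_perm_mul (π : Equiv.Perm ι) {u v : ι → X → ℝ}
    (huv : ∀ i, Integrable (fun z => u i z * v (π i) z) μ) :
    Integrable (fun x : ι → X => ∏ i, u i (x (π i)) * v i (x i)) (Measure.pi fun _ => μ) := by
  simp_rw [Finset.prod_comp_perm_mul]
  exact Integrable.fintype_prod fun j => by simpa using huv (π.symm j)

theorem integral_prod_comp_perm_mul (π : Equiv.Perm ι) (u v : ι → X → ℝ) :
    ∫ x : ι → X, ∏ i, u i (x (π i)) * v i (x i) ∂(Measure.pi fun _ => μ) =
      ∏ i, ∫ z, u i z * v (π i) z ∂μ := by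
  simp_rw [Finset.prod_comp_perm_mul]
  rw [integral_fintype_prod_eq_prod (fun j z => u (π.symm j) z * v j z),
    ← Equiv.prod_comp π fun j => ∫ z, u (π.symm j) z * v j z ∂μ]
  simp

variable [DecidableEq ι] {u v : ι → X → ℝ}

theorem integrable_det_of_mul (huv : ∀ a b, Integrable (fun z => u a z * v b z) μ) :
    Integrable (fun x : ι → X => (Matrix.of fun a b => u b (x a) * v b (x b)).det)
      (Measure.pi fun _ => μ) := by
  simp_rw [Matrix.det_of_mul_apply]
  exact integrable_finsetSum _ fun π _ =>
    (integrable_prod_comp_perm_mul π fun i => huv _ _).const_mul _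

theorem integral_det_of_mul (huv : ∀ a b, Integrable (fun z => u a z * v b z) μ) :
    ∫ x : ι → X, (Matrix.of fun a b => u b (x a) * v b (x b)).det ∂(Measure.pi fun _ => μ) =
      (Matrix.of fun a b => ∫ z, u b z * v a z ∂μ).det := by
  simp_rw [Matrix.det_of_mul_apply]
  rw [integral_finsetSum _ fun π _ =>
      (integrable_prod_comp_perm_mul π fun i => huv _ _).const_mul _, Matrix.det_apply']
  simp_rw [integral_const_mul, integral_prod_comp_perm_mul]
  rfl

theorem integral_norm_det_of_mul_le (huv : ∀ a b, Integrable (fun z => u a z * v b z) μ) :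
    ∫ x : ι → X, ‖(Matrix.of fun a b => u b (x a) * v b (x b)).det‖ ∂(Measure.pi fun _ => μ) ≤
      ∑ π : Equiv.Perm ι, ∏ i, ∫ z, |u i z * v (π i) z| ∂μ := by
  have hint (π : Equiv.Perm ι) :
      Integrable (fun x : ι → X => ∏ i, |u i (x (π i))| * |v i (x i)|) (Measure.pi fun _ => μ) :=
    integrable_prod_comp_perm_mul π (u := fun i z => |u i z|) (v := fun i z => |v i z|)
      fun i => by simpa only [abs_mul] using (huv _ _).abs
  have hbound (x : ι → X) : ‖(Matrix.of fun a b => u b (x a) * v b (x b)).det‖ ≤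
      ∑ π : Equiv.Perm ι, ∏ i, |u i (x (π i))| * |v i (x i)| := by
    rw [Matrix.det_of_mul_apply]
    refine (norm_sum_le _ _).trans (Finset.sum_le_sum fun π _ => ?_)
    simp [abs_unit_intCast]
  calc ∫ x : ι → X, ‖(Matrix.of fun a b => u b (x a) * v b (x b)).det‖ ∂(Measure.pi fun _ => μ)
    _ ≤ ∫ x : ι → X, ∑ π : Equiv.Perm ι, ∏ i, |u i (x (π i))| * |v i (x i)|
          ∂(Measure.pi fun _ => μ) :=
      integral_mono (integrable_det_of_mul huv).norm (integrable_finsetSum _ fun π _ => hint π)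
        hbound
    _ = ∑ π : Equiv.Perm ι, ∏ i, ∫ z, |u i z * v (π i) z| ∂μ := by
      rw [integral_finsetSum _ fun π _ => hint π]
      simp only [integral_prod_comp_perm_mul (u := fun i z => |u i z|) (v := fun i z => |v i z|),
        abs_mul]

end PiIntegral

theorem abs_mul_le_add_mul_self_div_two (a b : ℝ) : |a * b| ≤ (a * a + b * b) / 2 := by
  nlinarith [two_mul_le_add_sq |a| |b|, sq_abs a, sq_abs b, abs_mul a b]

section Orthonormal

variable {X β : Type*} [MeasurableSpace X] {μ : Measure X} [DecidableEq β] {e : β → X → ℝ}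

theorem integrable_mul_self_of_integral_eq_one {f : X → ℝ} (h : ∫ z, f z * f z ∂μ = 1) :
    Integrable (fun z => f z * f z) μ := by
  by_contra hf
  simp [integral_undef hf] at h

theorem integrable_mul_of_orthonormal (he_meas : ∀ m, Measurable (e m))
    (he_on : ∀ m n, ∫ z, e m z * e n z ∂μ = if m = n then 1 else 0) (m n : β) :
    Integrable (fun z => e m z * e n z) μ := by
  have hsq (k : β) := integrable_mul_self_of_integral_eq_one (by simpa using he_on k k)
  refine (((hsq m).add (hsq n)).div_const 2).mono'
    ((he_meas m).mul (he_meas n)).aestronglyMeasurable ?_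
  exact .of_forall fun z => abs_mul_le_add_mul_self_div_two _ _

theorem integral_abs_mul_le_one_of_orthonormal (he_meas : ∀ m, Measurable (e m))
    (he_on : ∀ m n, ∫ z, e m z * e n z ∂μ = if m = n then 1 else 0) (m n : β) :
    ∫ z, |e m z * e n z| ∂μ ≤ 1 := by
  have hsq (k : β) := integrable_mul_self_of_integral_eq_one (by simpa using he_on k k)
  calc ∫ z, |e m z * e n z| ∂μ ≤ ∫ z, (e m z * e m z + e n z * e n z) / 2 ∂μ :=
        integral_mono (integrable_mul_of_orthonormal he_meas he_on m n).abs
          (((hsq m).add (hsq n)).div_const 2) fun z => abs_mul_le_add_mul_self_div_two _ _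
    _ = 1 := by
        rw [integral_div, integral_add (hsq m) (hsq n), he_on, he_on]
        norm_num

variable {ι : Type*} [Fintype ι] [DecidableEq ι] [SigmaFinite μ]

theorem integral_det_of_orthonormal (he_meas : ∀ m, Measurable (e m))
    (he_on : ∀ m n, ∫ z, e m z * e n z ∂μ = if m = n then 1 else 0) (f : ι → β) :
    ∫ x : ι → X, (Matrix.of fun a b => e (f b) (x a) * e (f b) (x b)).det
        ∂(Measure.pi fun _ => μ) =
      if Function.Injective f then 1 else 0 := by
  rw [integral_det_of_mul fun a b => integrable_mul_of_orthonormal he_meas he_on _ _]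
  simp_rw [he_on]
  rw [← Matrix.det_transpose]
  exact Matrix.det_of_ite_eq f

theorem integral_norm_det_of_orthonormal_le (he_meas : ∀ m, Measurable (e m))
    (he_on : ∀ m n, ∫ z, e m z * e n z ∂μ = if m = n then 1 else 0) (f : ι → β) :
    ∫ x : ι → X, ‖(Matrix.of fun a b => e (f b) (x a) * e (f b) (x b)).det‖
        ∂(Measure.pi fun _ => μ) ≤
      (Fintype.card ι).factorial := by
  refine (integral_norm_det_of_mul_le fun a b =>
    integrable_mul_of_orthonormal he_meas he_on _ _).trans ?_
  calc ∑ π : Equiv.Perm ι, ∏ i, ∫ z, |e (f i) z * e (f (π i)) z| ∂μ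
      ≤ ∑ _π : Equiv.Perm ι, (1 : ℝ) := Finset.sum_le_sum fun π _ =>
        Finset.prod_le_one (fun i _ => integral_nonneg fun _ => abs_nonneg _)
          fun i _ => integral_abs_mul_le_one_of_orthonormal he_meas he_on _ _
    _ = (Fintype.card ι).factorial := by simp [Fintype.card_perm]

theorem integral_det_tsum_orthonormal [Countable β] {σ : β → ℝ} (he_meas : ∀ m, Measurable (e m))
    (he_on : ∀ m n, ∫ z, e m z * e n z ∂μ = if m = n then 1 else 0) (hσ : Summable σ)
    (habs : ∀ z w, Summable fun m => |σ m * e m z * e m w|) :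
    ∫ x : ι → X, (Matrix.of fun a b => ∑' m, σ m * e m (x a) * e m (x b)).det
        ∂(Measure.pi fun _ => μ) =
      ∑' f : {f : ι → β // Function.Injective f}, ∏ i, σ (f.1 i) := by
  set E : (ι → β) → (ι → X) → ℝ :=
    fun f x => (Matrix.of fun a b => e (f b) (x a) * e (f b) (x b)).det
  have hexpand (x : ι → X) : HasSum (fun f => (∏ i, σ (f i)) * E f x)
      (Matrix.of fun a b => ∑' m, σ m * e m (x a) * e m (x b)).det := by
    refine (Matrix.hasSum_det_of_tsum (fun m a b => σ m * e m (x a) * e m (x b))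
      fun a b => habs _ _).congr_fun fun f => ?_
    rw [← Matrix.det_mul_row]
    simp only [Matrix.of_apply, mul_assoc]
  have hint (f : ι → β) :
      Integrable (fun x => (∏ i, σ (f i)) * E f x) (Measure.pi fun _ => μ) :=
    (integrable_det_of_mul fun a b => integrable_mul_of_orthonormal he_meas he_on _ _).const_mul _
  have hnorm (f : ι → β) : ∫ x, ‖(∏ i, σ (f i)) * E f x‖ ∂(Measure.pi fun _ => μ) ≤
      (Fintype.card ι).factorial * ‖∏ i, σ (f i)‖ := by
    simp only [norm_mul, integral_const_mul, mul_comm _ ‖∏ i, σ (f i)‖]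
    exact mul_le_mul_of_nonneg_left (integral_norm_det_of_orthonormal_le he_meas he_on f)
      (norm_nonneg _)
  have hsum :
      Summable fun f : ι → β => ∫ x, ‖(∏ i, σ (f i)) * E f x‖ ∂(Measure.pi fun _ => μ) :=
    .of_nonneg_of_le (fun f => integral_nonneg fun _ => norm_nonneg _) hnorm
      ((summable_norm_prod_and_hasSum_prod_tsum (fun _ => σ) fun _ => hσ.abs).1.mul_left _)
  calc _ = ∫ x, ∑' f, (∏ i, σ (f i)) * E f x ∂(Measure.pi fun _ => μ) :=
        integral_congr_ae (.of_forall fun x => (hexpand x).tsum_eq.symm)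
    _ = ∑' f, ∫ x, (∏ i, σ (f i)) * E f x ∂(Measure.pi fun _ => μ) :=
        (integral_tsum_of_summable_integral_norm hint hsum).symm
    _ = ∑' f : ι → β, {f | Function.Injective f}.indicator (fun f => ∏ i, σ (f i)) f := by
        simp only [E, integral_const_mul, integral_det_of_orthonormal he_meas he_on]
        congr 1 with f
        by_cases hf : Function.Injective f <;> simp [hf]
    _ = _ := (tsum_subtype _ _).symm

end Orthonormal

section SortedEnumeration

variable {I : Type*} [LinearOrder I] {N : ℕ}

theorem Finset.image_univ_orderEmbOfFin_comp (s : Finset I) (hs : s.card = N)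
    (τ : Equiv.Perm (Fin N)) : univ.image (s.orderEmbOfFin hs ∘ τ) = s := by
  rw [← image_image, image_univ_equiv, image_orderEmbOfFin_univ]

theorem bijective_orderEmbOfFin_comp_perm :
    Function.Bijective fun p : {s : Finset I // s.card = N} × Equiv.Perm (Fin N) =>
      (⟨p.1.1.orderEmbOfFin p.1.2 ∘ p.2,
        (p.1.1.orderEmbOfFin p.1.2).injective.comp p.2.injective⟩ :
          {f : Fin N → I // Function.Injective f}) := by
  refine ⟨?_, fun ⟨f, hf⟩ => ?_⟩
  · rintro ⟨⟨s, hs⟩, τ⟩ ⟨⟨s', hs'⟩, τ'⟩ h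
    have hf : s.orderEmbOfFin hs ∘ τ = s'.orderEmbOfFin hs' ∘ τ' := congrArg Subtype.val h
    obtain rfl : s = s' := by
      rw [← s.image_univ_orderEmbOfFin_comp hs τ, hf, s'.image_univ_orderEmbOfFin_comp hs' τ']
    obtain rfl : τ = τ' := Equiv.ext fun i => (s.orderEmbOfFin hs).injective (congrFun hf i)
    rfl
  · set s := Finset.univ.image f
    have hs : s.card = N := by simp [s, Finset.card_image_of_injective _ hf]
    let g : Fin N → Fin N := fun i => (s.orderIsoOfFin hs).symm ⟨f i, by simp [s]⟩
    have hg (i : Fin N) : s.orderEmbOfFin hs (g i) = f i := by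
      simp [g, ← Finset.coe_orderIsoOfFin_apply]
    have hginj : Function.Injective g := fun i j hij => hf <| by rw [← hg i, ← hg j, hij]
    exact ⟨(⟨s, hs⟩, Equiv.ofBijective g (Finite.injective_iff_bijective.mp hginj)),
      Subtype.ext (funext hg)⟩

theorem summable_and_tsum_prod_injective {R : Type*} [NormedCommRing R] [CompleteSpace R]
    {σ : I → R}
    (h : Summable fun f : {f : Fin N → I // Function.Injective f} => ∏ i, σ (f.1 i)) :
    Summable (fun T : {s : Finset I // s.card = N} => ∏ t ∈ T.1, σ t) ∧
      ∑' f : {f : Fin N → I // Function.Injective f}, ∏ i, σ (f.1 i) =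
        N.factorial * ∑' T : {s : Finset I // s.card = N}, ∏ t ∈ T.1, σ t := by
  let E := Equiv.ofBijective _ (bijective_orderEmbOfFin_comp_perm (I := I) (N := N))
  have hE (p : {s : Finset I // s.card = N} × Equiv.Perm (Fin N)) :
      ∏ i, σ ((E p).1 i) = ∏ t ∈ p.1.1, σ t := by
    obtain ⟨⟨s, hs⟩, τ⟩ := p
    calc ∏ i, σ (s.orderEmbOfFin hs (τ i)) = ∏ i, σ (s.orderEmbOfFin hs i) :=
          Equiv.prod_comp τ fun i => σ (s.orderEmbOfFin hs i)
      _ = ∏ t ∈ Finset.univ.map (s.orderEmbOfFin hs).toEmbedding, σ t :=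
          (Finset.prod_map _ _ _).symm
      _ = ∏ t ∈ s, σ t := by rw [s.map_orderEmbOfFin_univ hs]
  have hprod : Summable fun p : {s : Finset I // s.card = N} × Equiv.Perm (Fin N) =>
      ∏ t ∈ p.1.1, σ t :=
    (E.summable_iff.mpr h).congr hE
  have hT : Summable fun T : {s : Finset I // s.card = N} => ∏ t ∈ T.1, σ t :=
    hprod.comp_injective (i := fun T => (T, 1)) fun T T' h => congrArg Prod.fst h
  refine ⟨hT, ?_⟩
  rw [← E.tsum_eq, tsum_congr hE, hprod.tsum_prod' fun _ => .of_finite, ← hT.tsum_mul_left]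
  simp [tsum_fintype, Fintype.card_perm]

end SortedEnumeration

theorem stmt7_general {X : Type*} [MeasurableSpace X] (ω : Measure X) [IsProbabilityMeasure ω]
    (e : ℕ → X → ℝ) (he_meas : ∀ m, Measurable (e m))
    (he_on : ∀ m n : ℕ, ∫ z, e m z * e n z ∂ω = if m = n then 1 else 0)
    (σ : ℕ → ℝ) (hσsum : Summable σ)
    (habs : ∀ z w : X, Summable fun m => |σ m * e m z * e m w|)
    (k : X → X → ℝ) (hk : ∀ z w, k z w = ∑' m, σ m * e m z * e m w)
    (N : ℕ) :
    Summable (fun T : {s : Finset ℕ // s.card = N} => ∏ t ∈ (T : Finset ℕ), σ t) ∧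
    (1 / (N.factorial : ℝ)) *
        ∫ x : Fin N → X, (Matrix.of fun i j : Fin N => k (x i) (x j)).det
          ∂(Measure.pi fun _ : Fin N => ω)
      = ∑' T : {s : Finset ℕ // s.card = N}, ∏ t ∈ (T : Finset ℕ), σ t := by
  have hP : Summable fun f : Fin N → ℕ => ∏ i, σ (f i) :=
    (summable_norm_prod_and_hasSum_prod_tsum (fun _ => σ) fun _ => hσsum.abs).2.summable
  obtain ⟨hT, hval⟩ := summable_and_tsum_prod_injective (hP.subtype {f | Function.Injective f})
  refine ⟨hT, ?_⟩
  simp only [hk]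
  rw [integral_det_tsum_orthonormal he_meas he_on hσsum habs, hval]
  field_simp

/-- For an orthonormal family `(e_m)` in `L²(dω)`, nonnegative summable
`(σ_m)` and `k(x,y) = ∑_m σ_m e_m(x) e_m(y)` (pointwise absolutely convergent),
`(1/N!) ∫_{X^N} det (k(x_i,x_j))_{i,j} dω^N = ∑_{T ⊂ ℕ*, |T|=N} ∏_{t∈T} σ_t`,
and the right-hand sum is finite. Indices are 0-based. -/
theorem stmt7 {X : Type*} [MeasurableSpace X] (ω : Measure X) [IsProbabilityMeasure ω]
    (e : ℕ → X → ℝ) (he_meas : ∀ m, Measurable (e m))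
    (he_on : ∀ m n : ℕ, ∫ z, e m z * e n z ∂ω = if m = n then 1 else 0)
    (σ : ℕ → ℝ) (hσ : ∀ m, 0 ≤ σ m) (hσsum : Summable σ)
    (hdiag : ∀ z : X, Summable fun m => σ m * (e m z) ^ 2)
    (habs : ∀ z w : X, Summable fun m => |σ m * e m z * e m w|)
    (k : X → X → ℝ) (hk : ∀ z w, k z w = ∑' m, σ m * e m z * e m w)
    (N : ℕ) (hN : 1 ≤ N) :
    Summable (fun T : {s : Finset ℕ // s.card = N} => ∏ t ∈ (T : Finset ℕ), σ t) ∧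
    (1 / (N.factorial : ℝ)) *
        ∫ x : Fin N → X, (Matrix.of fun i j : Fin N => k (x i) (x j)).det
          ∂(Measure.pi fun _ : Fin N => ω)
      = ∑' T : {s : Finset ℕ // s.card = N}, ∏ t ∈ (T : Finset ℕ), σ t :=
  stmt7_general ω e he_meas he_on σ hσsum habs k hk N
end

section
/- Let x = (x_1,…,x_N) ∈ X^N with det E(x) ≠ 0, so that both K(x) and K̃(x) are invertible. Then for every n ∈ [N], σ_n ( 1 − σ_n u_nᵀ K(x)^{-1} u_n ) ≤ σ_1 ( 1 − σ_1 u_nᵀ K̃(x)^{-1} u_n ), where u_m := (e_m(x_j))_{j∈[N]} ∈ ℝ^N. Equivalently, σ_n ‖Π_{T(x)^⊥} e_n^F‖_F² ≤ σ_1 ‖Π_{T̃(x)^⊥} e_n^{F̃}‖_{F̃}², where F̃ is the RKHS of k̃, e_n^{F̃} = √σ_1 e_n for n ≤ N, and T̃(x) = span{k̃(x_j,·)}. -/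
open scoped BigOperators Matrix

/-!
For positive definite `K`, `s (1 - s uᵀK⁻¹u)` is the minimum over `w` of
`s + 2s⟪u, w⟫ + wᵀKw` (attained at `w = -s K⁻¹u`). For `s = σₙ`, `u = uₙ` and a Gram matrix
`K = ∑ₘ σₘ uₘuₘᵀ` this quadratic equals `∑ₘ σₘ (δₘₙ + ⟪uₘ, w⟫)²`, the squared norm of
`σₙ eₙ + ∑ⱼ wⱼ k(xⱼ, ·)` in `F`, which is pointwise monotone in the weights. Since `σ` is antitone,
the weights `σ̃` of `k̃` dominate `σ` and `σ̃ₙ = σ₁` for `n ≤ N`, so the minimum can only grow.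
Both Gram matrices are positive definite because `u₁, …, u_N` already span `ℝᴺ` when
`det E(x) ≠ 0`.
-/

namespace Matrix.PosDef

variable {ι : Type*} [Fintype ι] [DecidableEq ι] {K : Matrix ι ι ℝ}

theorem isLeast_range_quadratic (hK : K.PosDef) (s : ℝ) (u : ι → ℝ) :
    IsLeast (Set.range fun w => s + 2 * s * (u ⬝ᵥ w) + w ⬝ᵥ K *ᵥ w)
      (s * (1 - s * (u ⬝ᵥ K⁻¹ *ᵥ u))) := by
  have hdet : IsUnit K.det := (K.isUnit_iff_isUnit_det).1 hK.isUnit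
  have hsymm : Kᵀ = K := hK.isHermitian
  have hKinv : ∀ b, K *ᵥ K⁻¹ *ᵥ b = b := fun b => by
    rw [mulVec_mulVec, mul_nonsing_inv _ hdet, one_mulVec]
  have hcross : ∀ b, K⁻¹ *ᵥ u ⬝ᵥ K *ᵥ b = u ⬝ᵥ b := fun b => by
    rw [dotProduct_mulVec, ← mulVec_transpose, hsymm, dotProduct_comm, hKinv, dotProduct_comm]
  refine ⟨⟨-s • K⁻¹ *ᵥ u, ?_⟩, ?_⟩
  · simp only [mulVec_smul, hKinv, dotProduct_smul, smul_dotProduct, smul_eq_mul,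
      dotProduct_comm (K⁻¹ *ᵥ u) u]
    ring
  · rintro _ ⟨w, rfl⟩
    -- the gap is the `K`-norm of `w + s K⁻¹ u`
    have hgap := hK.posSemidef.dotProduct_mulVec_nonneg (w + s • K⁻¹ *ᵥ u)
    simp only [star_trivial, mulVec_add, mulVec_smul, hKinv, add_dotProduct, dotProduct_add,
      smul_dotProduct, dotProduct_smul, smul_eq_mul, hcross, dotProduct_comm w u,
      dotProduct_comm (K⁻¹ *ᵥ u) u] at hgap
    dsimp only
    nlinarith

end Matrix.PosDef

theorem summable_mul_mul_of_summable_mul_sq {σ f g : ℕ → ℝ} (hσ : ∀ m, 0 ≤ σ m)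
    (hf : Summable fun m => σ m * f m ^ 2) (hg : Summable fun m => σ m * g m ^ 2) :
    Summable fun m => σ m * f m * g m := by
  refine Summable.of_norm_bounded ((hf.add hg).div_const 2) fun m => ?_
  rw [Real.norm_eq_abs, mul_assoc, abs_mul, abs_of_nonneg (hσ m), abs_mul]
  have := two_mul_le_add_sq |f m| |g m|
  rw [sq_abs, sq_abs] at this
  nlinarith [hσ m]

noncomputable def kernelMatrix {ι : Type*} (σ : ℕ → ℝ) (a : ℕ → ι → ℝ) : Matrix ι ι ℝ :=
  Matrix.of fun i j => ∑' m, σ m * a m i * a m j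

section kernelMatrix

variable {ι : Type*} {σ τ : ℕ → ℝ} {a : ℕ → ι → ℝ}

theorem kernelMatrix_isHermitian : (kernelMatrix σ a).IsHermitian := by
  ext i j
  simp only [kernelMatrix, Matrix.conjTranspose_apply, Matrix.of_apply, star_trivial]
  exact tsum_congr fun m => by ring

variable [Fintype ι]

theorem hasSum_mul_dotProduct_sq (hσ : ∀ m, 0 ≤ σ m)
    (ha : ∀ j, Summable fun m => σ m * a m j ^ 2) (w : ι → ℝ) :
    HasSum (fun m => σ m * (a m ⬝ᵥ w) ^ 2) (w ⬝ᵥ kernelMatrix σ a *ᵥ w) := by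
  have hentry : ∀ i j, HasSum (fun m => w i * (σ m * a m i * a m j) * w j)
      (w i * kernelMatrix σ a i j * w j) := fun i j =>
    ((summable_mul_mul_of_summable_mul_sq hσ (ha i) (ha j)).hasSum.mul_left (w i)).mul_right (w j)
  convert hasSum_sum fun i (_ : i ∈ Finset.univ) =>
    hasSum_sum fun j (_ : j ∈ Finset.univ) => hentry i j using 1
  · ext m
    rw [dotProduct, sq, Finset.sum_mul_sum, Finset.mul_sum]
    refine Finset.sum_congr rfl fun i _ => ?_
    rw [Finset.mul_sum]
    exact Finset.sum_congr rfl fun j _ => by ring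
  · simp only [dotProduct, Matrix.mulVec, Finset.mul_sum, mul_assoc]

theorem kernelMatrix_posDef (hσ : ∀ m, 0 ≤ σ m)
    (ha : ∀ j, Summable fun m => σ m * a m j ^ 2)
    (hspan : ∀ w ≠ 0, ∃ m, 0 < σ m ∧ a m ⬝ᵥ w ≠ 0) : (kernelMatrix σ a).PosDef := by
  refine .of_dotProduct_mulVec_pos kernelMatrix_isHermitian fun w hw => ?_
  obtain ⟨m, hσm, hm⟩ := hspan w hw
  have hsum := hasSum_mul_dotProduct_sq hσ ha w
  rw [star_trivial, ← hsum.tsum_eq]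
  exact hsum.summable.tsum_pos (fun m => mul_nonneg (hσ m) (sq_nonneg _)) m
    (mul_pos hσm (sq_pos_of_ne_zero hm))

theorem hasSum_mul_single_add_dotProduct_sq (hσ : ∀ m, 0 ≤ σ m)
    (ha : ∀ j, Summable fun m => σ m * a m j ^ 2) (n : ℕ) (w : ι → ℝ) :
    HasSum (fun m => σ m * ((Pi.single n 1 : ℕ → ℝ) m + a m ⬝ᵥ w) ^ 2)
      (σ n + 2 * σ n * (a n ⬝ᵥ w) + w ⬝ᵥ kernelMatrix σ a *ᵥ w) := by
  convert (hasSum_mul_dotProduct_sq hσ ha w).add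
    (hasSum_pi_single n (σ n * (1 + 2 * (a n ⬝ᵥ w)))) using 1
  · ext m
    rcases eq_or_ne m n with rfl | hmn
    · simp only [Pi.single_eq_same]; ring
    · simp only [Pi.single_eq_of_ne hmn, zero_add, add_zero]
  · ring

theorem kernelMatrix_residual_le_of_le [DecidableEq ι] (hσ : ∀ m, 0 ≤ σ m) (hστ : σ ≤ τ)
    (hσa : ∀ j, Summable fun m => σ m * a m j ^ 2) (hτa : ∀ j, Summable fun m => τ m * a m j ^ 2)
    (hKσ : (kernelMatrix σ a).PosDef) (hKτ : (kernelMatrix τ a).PosDef) (n : ℕ) :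
    σ n * (1 - σ n * (a n ⬝ᵥ (kernelMatrix σ a)⁻¹ *ᵥ a n))
      ≤ τ n * (1 - τ n * (a n ⬝ᵥ (kernelMatrix τ a)⁻¹ *ᵥ a n)) := by
  have hτ : ∀ m, 0 ≤ τ m := fun m => (hσ m).trans (hστ m)
  obtain ⟨⟨w, hw⟩, -⟩ := hKτ.isLeast_range_quadratic (τ n) (a n)
  dsimp only at hw
  rw [← hw]
  exact (hKσ.isLeast_range_quadratic (σ n) (a n)).2 ⟨w, rfl⟩ |>.trans <|
    hasSum_le (fun m => mul_le_mul_of_nonneg_right (hστ m) (sq_nonneg _))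
      (hasSum_mul_single_add_dotProduct_sq hσ hσa n w)
      (hasSum_mul_single_add_dotProduct_sq hτ hτa n w)

end kernelMatrix

-- The paper's `σ̃`: `K(x) = kernelMatrix σ u` and `K̃(x) = kernelMatrix (capHead σ N) u`.
def capHead (σ : ℕ → ℝ) (N m : ℕ) : ℝ := if m < N then σ 0 else σ m

theorem le_capHead {σ : ℕ → ℝ} (hσ : Antitone σ) (N : ℕ) : σ ≤ capHead σ N := fun m => by
  unfold capHead; split_ifs
  exacts [hσ (Nat.zero_le m), le_rfl]

theorem capHead_add (σ : ℕ → ℝ) (N m : ℕ) : capHead σ N (m + N) = σ (m + N) :=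
  if_neg (by omega)

theorem summable_capHead_mul_iff {σ f : ℕ → ℝ} (N : ℕ) :
    (Summable fun m => capHead σ N m * f m) ↔ Summable fun m => σ m * f m := by
  rw [← summable_nat_add_iff N, ← summable_nat_add_iff (f := fun m => σ m * f m) N]
  simp only [capHead_add]

theorem tsum_capHead_mul {σ f : ℕ → ℝ} {N : ℕ} (hf : Summable fun m => σ m * f m) :
    ∑' m, capHead σ N m * f m = σ 0 * ∑ m : Fin N, f m + ∑' m, σ (N + m) * f (N + m) := by
  rw [← ((summable_capHead_mul_iff N).2 hf).sum_add_tsum_nat_add N, Finset.mul_sum,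
    ← Fin.sum_univ_eq_sum_range (fun m => capHead σ N m * f m)]
  simp only [capHead_add]
  simp only [capHead, Fin.is_lt, if_true, add_comm _ N]

-- Indices are 0-based: `σ 0` is the paper's `σ_1`.
theorem stmt9_general {X : Type*}
    (e : ℕ → X → ℝ) (σ : ℕ → ℝ)
    (hσpos : ∀ m, 0 < σ m) (hσanti : Antitone σ)
    (hdiag : ∀ z : X, Summable fun m => σ m * (e m z) ^ 2)
    (N : ℕ) (x : Fin N → X)
    (u : ℕ → Fin N → ℝ) (hu : ∀ m, u m = fun j => e m (x j))
    (K : Matrix (Fin N) (Fin N) ℝ)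
    (hK : K = Matrix.of fun i j : Fin N => ∑' m : ℕ, σ m * e m (x i) * e m (x j))
    (Kt : Matrix (Fin N) (Fin N) ℝ)
    (hKt : Kt = Matrix.of fun i j : Fin N =>
      σ 0 * ∑ m : Fin N, e m.val (x i) * e m.val (x j) +
        ∑' m : ℕ, σ (N + m) * e (N + m) (x i) * e (N + m) (x j))
    (hEdet : (Matrix.of fun i j : Fin N => e i.val (x j)).det ≠ 0) :
    IsUnit K ∧ IsUnit Kt ∧
    ∀ n : Fin N,
      σ n.val * (1 - σ n.val * (u n.val ⬝ᵥ K⁻¹.mulVec (u n.val)))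
        ≤ σ 0 * (1 - σ 0 * (u n.val ⬝ᵥ Kt⁻¹.mulVec (u n.val))) := by
  have hu : u = fun m j => e m (x j) := funext hu
  have hσ : ∀ m, 0 ≤ σ m := fun m => (hσpos m).le
  have hσu : ∀ j, Summable fun m => σ m * u m j ^ 2 := fun j => by
    simpa only [hu] using hdiag (x j)
  have hτu : ∀ j, Summable fun m => capHead σ N m * u m j ^ 2 :=
    fun j => (summable_capHead_mul_iff N).2 (hσu j)
  have hK' : K = kernelMatrix σ u := by rw [hK, hu]; rfl
  have hKt' : Kt = kernelMatrix (capHead σ N) u := by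
    ext i j
    have hij := summable_mul_mul_of_summable_mul_sq hσ (hσu i) (hσu j)
    simp only [hu, mul_assoc] at hij
    simp only [hKt, kernelMatrix, Matrix.of_apply, hu, mul_assoc]
    exact (tsum_capHead_mul hij).symm
  have hspan : ∀ w ≠ 0, ∃ m, u m ⬝ᵥ w ≠ 0 := fun w hw => by
    by_contra! h
    rw [hu] at h
    exact hw (Matrix.eq_zero_of_mulVec_eq_zero hEdet (funext fun i => h i))
  have hKσ : (kernelMatrix σ u).PosDef := kernelMatrix_posDef hσ hσu fun w hw =>
    (hspan w hw).imp fun m hm => ⟨hσpos m, hm⟩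
  have hKτ : (kernelMatrix (capHead σ N) u).PosDef :=
    kernelMatrix_posDef (fun m => (hσ m).trans (le_capHead hσanti N m)) hτu fun w hw =>
      (hspan w hw).imp fun m hm => ⟨(hσpos m).trans_le (le_capHead hσanti N m), hm⟩
  subst hK' hKt'
  refine ⟨hKσ.isUnit, hKτ.isUnit, fun n => ?_⟩
  simpa only [capHead, n.is_lt, if_true] using
    kernelMatrix_residual_le_of_le hσ (le_capHead hσanti N) hσu hτu hKσ hKτ n

/-- **Proposition 6 of the paper.** With `k̃` the kernel whose first `N`
eigenvalues are capped at `σ_1`, if `det E(x) ≠ 0` then `K(x)` and `K̃(x)` are invertible and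
for every `n ∈ [N]`,
`σ_n (1 − σ_n u_nᵀ K(x)⁻¹ u_n) ≤ σ_1 (1 − σ_1 u_nᵀ K̃(x)⁻¹ u_n)`.
(Indices are 0-based: `σ 0` is the paper's `σ_1`.) -/
theorem stmt9 {X : Type*}
    (e : ℕ → X → ℝ) (σ : ℕ → ℝ)
    (hσpos : ∀ m, 0 < σ m) (hσanti : Antitone σ) (hσsum : Summable σ)
    (hdiag : ∀ z : X, Summable fun m => σ m * (e m z) ^ 2)
    (N : ℕ) (x : Fin N → X)
    (u : ℕ → Fin N → ℝ) (hu : ∀ m, u m = fun j => e m (x j))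
    (K : Matrix (Fin N) (Fin N) ℝ)
    (hK : K = Matrix.of fun i j : Fin N => ∑' m : ℕ, σ m * e m (x i) * e m (x j))
    (Kt : Matrix (Fin N) (Fin N) ℝ)
    (hKt : Kt = Matrix.of fun i j : Fin N =>
      σ 0 * ∑ m : Fin N, e m.val (x i) * e m.val (x j) +
        ∑' m : ℕ, σ (N + m) * e (N + m) (x i) * e (N + m) (x j))
    (hEdet : (Matrix.of fun i j : Fin N => e i.val (x j)).det ≠ 0) :
    IsUnit K ∧ IsUnit Kt ∧
    ∀ n : Fin N,
      σ n.val * (1 - σ n.val * (u n.val ⬝ᵥ K⁻¹.mulVec (u n.val)))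
        ≤ σ 0 * (1 - σ 0 * (u n.val ⬝ᵥ Kt⁻¹.mulVec (u n.val))) :=
  stmt9_general e σ hσpos hσanti hdiag N x u hu K hK Kt hKt hEdet
end

section
/- Let x = (x_1,…,x_N) ∈ X^N with det E(x) ≠ 0, so that each matrix K^{(ℓ)}(x) is invertible, and define Δ_n^{(ℓ)}(x) := σ^{(ℓ)}_n · u_nᵀ (K^{(ℓ)}(x))^{-1} u_n. Then for every n ∈ [N] with n ≠ 1: (i) σ_n ( 1 − Δ_n^{(n-1)}(x) ) ≤ σ_1 ( 1 − Δ_n^{(n)}(x) ), and (ii) for every ℓ ∈ [N] with ℓ ∉ {1, n}: 1 − Δ_n^{(ℓ-1)}(x) ≤ 1 − Δ_n^{(ℓ)}(x). -/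
/-!
Each `K^{(ℓ)}` is a Gram matrix `∑ h_m u_m u_mᵀ` with positive weights `h_m`; since `det E ≠ 0`
the `u_m` span `ℝ^N`, so it is positive definite, and `K^{(ℓ)} = K^{(ℓ-1)} + (σ_1 - σ_ℓ) u_ℓ u_ℓᵀ`
is a positive semidefinite rank-one update.

(ii) For `ℓ ≠ n` the factor `σ^{(ℓ)}_n` does not depend on the update, and inversion reverses
the Loewner order.

(i) With `q = u_nᵀ (K^{(n-1)})⁻¹ u_n`, Sherman–Morrison gives
`u_nᵀ (K^{(n)})⁻¹ u_n = q / (1 + (σ_1 - σ_n) q)`, and `K^{(n-1)} ⪰ σ_n u_n u_nᵀ` gives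
`σ_n q ≤ 1`; the inequality then reduces to `(σ_1 - σ_n) (1 - σ_n q)² ≥ 0`.
-/

open scoped Matrix
open Matrix

section InverseQuadraticForm

variable {ι : Type*} [Fintype ι] [DecidableEq ι]

lemma Matrix.mulVec_inv_mulVec {R : Type*} [CommRing R] {A : Matrix ι ι R} (hA : IsUnit A)
    (w : ι → R) : A *ᵥ (A⁻¹ *ᵥ w) = w := by
  rw [mulVec_mulVec, mul_nonsing_inv _ ((isUnit_iff_isUnit_det A).1 hA), one_mulVec]

lemma Matrix.inv_mulVec_mulVec {R : Type*} [CommRing R] {A : Matrix ι ι R} (hA : IsUnit A)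
    (w : ι → R) : A⁻¹ *ᵥ (A *ᵥ w) = w := by
  rw [mulVec_mulVec, nonsing_inv_mul _ ((isUnit_iff_isUnit_det A).1 hA), one_mulVec]

lemma Matrix.PosDef.dotProduct_inv_mulVec_le {A B : Matrix ι ι ℝ} (hA : A.PosDef)
    (hAB : (B - A).PosSemidef) (w : ι → ℝ) : w ⬝ᵥ B⁻¹ *ᵥ w ≤ w ⬝ᵥ A⁻¹ *ᵥ w := by
  have hB : B.PosDef := by simpa using hA.add_posSemidef hAB
  set a := A⁻¹ *ᵥ w
  set b := B⁻¹ *ᵥ w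
  have hAa : A *ᵥ a = w := mulVec_inv_mulVec hA.isUnit w
  have hBb : B *ᵥ b = w := mulVec_inv_mulVec hB.isUnit w
  have hAt : Aᵀ = A := by simpa [conjTranspose_eq_transpose_of_trivial] using hA.isHermitian.eq
  have hAb : a ⬝ᵥ A *ᵥ b = w ⬝ᵥ b := by
    rw [dotProduct_mulVec, ← mulVec_transpose, hAt, hAa]
  have hBA : 0 ≤ b ⬝ᵥ (B - A) *ᵥ b := by simpa using hAB.dotProduct_mulVec_nonneg b
  have hba : 0 ≤ (b - a) ⬝ᵥ A *ᵥ (b - a) := by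
    simpa using hA.posSemidef.dotProduct_mulVec_nonneg (b - a)
  rw [sub_mulVec, hBb, dotProduct_sub] at hBA
  rw [mulVec_sub, hAa, dotProduct_sub, sub_dotProduct, sub_dotProduct, hAb] at hba
  linarith [dotProduct_comm a w, dotProduct_comm b w]

-- Sherman–Morrison, tested against `v`.
lemma Matrix.one_add_mul_mul_dotProduct_inv_add_smul_vecMulVec {R : Type*} [CommRing R]
    {A : Matrix ι ι R} (hA : IsUnit A) (t : R) (v : ι → R) (hB : IsUnit (A + t • vecMulVec v v)) :
    (1 + t * (v ⬝ᵥ A⁻¹ *ᵥ v)) * (v ⬝ᵥ (A + t • vecMulVec v v)⁻¹ *ᵥ v) = v ⬝ᵥ A⁻¹ *ᵥ v := by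
  set a := A⁻¹ *ᵥ v
  have hBa : (A + t • vecMulVec v v) *ᵥ a = (1 + t * (v ⬝ᵥ a)) • v := by
    rw [add_mulVec, mulVec_inv_mulVec hA, smul_mulVec, vecMulVec_mulVec, op_smul_eq_smul,
      smul_smul, add_smul, one_smul]
  have ha : a = (1 + t * (v ⬝ᵥ a)) • (A + t • vecMulVec v v)⁻¹ *ᵥ v := by
    rw [← mulVec_smul, ← hBa, inv_mulVec_mulVec hB]
  conv_rhs => rw [ha]
  rw [dotProduct_smul, smul_eq_mul]

lemma mul_one_sub_mul_dotProduct_inv_mulVec_le {A : Matrix ι ι ℝ} (hA : A.PosDef) {s t : ℝ}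
    (hst : s ≤ t) (v : ι → ℝ) (hAv : ∀ y, s * (v ⬝ᵥ y) ^ 2 ≤ y ⬝ᵥ A *ᵥ y) :
    s * (1 - s * (v ⬝ᵥ A⁻¹ *ᵥ v)) ≤
      t * (1 - t * (v ⬝ᵥ (A + (t - s) • vecMulVec v v)⁻¹ *ᵥ v)) := by
  have hB : (A + (t - s) • vecMulVec v v).PosDef := hA.add_posSemidef <| by
    simpa using (posSemidef_vecMulVec_self_star v).smul (sub_nonneg.2 hst)
  have hSM := one_add_mul_mul_dotProduct_inv_add_smul_vecMulVec hA.isUnit (t - s) v hB.isUnit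
  set q := v ⬝ᵥ A⁻¹ *ᵥ v
  set qB := v ⬝ᵥ (A + (t - s) • vecMulVec v v)⁻¹ *ᵥ v
  have hq : 0 ≤ q := by simpa using hA.inv.posSemidef.dotProduct_mulVec_nonneg v
  have hsq : s * q ≤ 1 := by
    have hAq : s * q ^ 2 ≤ q := by
      simpa only [mulVec_inv_mulVec hA.isUnit, dotProduct_comm _ v] using hAv (A⁻¹ *ᵥ v)
    rcases hq.eq_or_lt with hq0 | hq0
    · simp [← hq0]
    · nlinarith
  have hD : 0 < 1 + (t - s) * q := by nlinarith
  have hRHS : t * (1 - t * qB) * (1 + (t - s) * q) = t * (1 + (t - s) * q) - t ^ 2 * q := by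
    linear_combination (-t ^ 2) * hSM
  refine le_of_mul_le_mul_right ?_ hD
  rw [hRHS]
  -- the gap is `(t - s) (1 - s q)²`
  nlinarith [mul_nonneg (sub_nonneg.2 hst) (sq_nonneg (1 - s * q))]

end InverseQuadraticForm

lemma summable_mul_mul_of_summable_mul_sq_s10 {β : Type*} {h a b : β → ℝ} (h0 : ∀ m, 0 ≤ h m)
    (ha : Summable fun m => h m * a m ^ 2) (hb : Summable fun m => h m * b m ^ 2) :
    Summable fun m => h m * a m * b m := by
  refine Summable.of_norm_bounded ((ha.add hb).div_const 2) fun m => ?_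
  rw [Real.norm_eq_abs, abs_mul, abs_mul, abs_of_nonneg (h0 m), ← sq_abs (a m), ← sq_abs (b m)]
  nlinarith [mul_nonneg (h0 m) (sq_nonneg (|a m| - |b m|))]

section WeightedGram

variable {ι : Type*}

noncomputable def weightedGram (h : ℕ → ℝ) (u : ℕ → ι → ℝ) : Matrix ι ι ℝ :=
  Matrix.of fun i j => ∑' m, h m * u m i * u m j

variable {h : ℕ → ℝ} {u : ℕ → ι → ℝ}

lemma weightedGram_add_single (hsum : ∀ i j, Summable fun m => h m * u m i * u m j)
    (c : ℕ) (t : ℝ) :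
    weightedGram (h + Pi.single c t) u = weightedGram h u + t • vecMulVec (u c) (u c) := by
  ext i j
  have hsingle :
      HasSum (fun m => (Pi.single c t : ℕ → ℝ) m * u m i * u m j) (t * u c i * u c j) := by
    simpa using hasSum_single (f := fun m => (Pi.single c t : ℕ → ℝ) m * u m i * u m j) c
      fun m hm => by simp [hm]
  refine (((hsum i j).hasSum.add hsingle).congr_fun fun m => ?_).tsum_eq.trans ?_
  · simp only [Pi.add_apply]; ring
  · simp [weightedGram, vecMulVec, mul_assoc]

variable [Fintype ι]

lemma hasSum_dotProduct_weightedGram_mulVec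
    (hsum : ∀ i j, Summable fun m => h m * u m i * u m j) (y : ι → ℝ) :
    HasSum (fun m => h m * (u m ⬝ᵥ y) ^ 2) (y ⬝ᵥ weightedGram h u *ᵥ y) := by
  have hterm : ∀ i j, HasSum (fun m => y i * (h m * u m i * u m j * y j))
      (y i * (weightedGram h u i j * y j)) :=
    fun i j => ((hsum i j).hasSum.mul_right (y j)).mul_left (y i)
  convert hasSum_sum fun i _ => hasSum_sum fun j _ => hterm i j using 1
  · ext m
    simp only [dotProduct, sq, Finset.mul_sum, Finset.sum_mul]
    rw [Finset.sum_comm]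
    exact Finset.sum_congr rfl fun i _ => Finset.sum_congr rfl fun j _ => by ring
  · simp only [dotProduct, mulVec, Finset.mul_sum]

lemma mul_sq_le_dotProduct_weightedGram_mulVec (h0 : ∀ m, 0 ≤ h m)
    (hsum : ∀ i j, Summable fun m => h m * u m i * u m j) (m : ℕ) (y : ι → ℝ) :
    h m * (u m ⬝ᵥ y) ^ 2 ≤ y ⬝ᵥ weightedGram h u *ᵥ y :=
  le_hasSum (hasSum_dotProduct_weightedGram_mulVec hsum y) m
    fun k _ => mul_nonneg (h0 k) (sq_nonneg _)

lemma posDef_weightedGram (hpos : ∀ m, 0 < h m)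
    (hsum : ∀ i j, Summable fun m => h m * u m i * u m j)
    (hspan : ∀ y ≠ 0, ∃ m, u m ⬝ᵥ y ≠ 0) : (weightedGram h u).PosDef := by
  refine PosDef.of_dotProduct_mulVec_pos ?_ fun y hy => ?_
  · ext i j
    simp only [conjTranspose_apply, weightedGram, of_apply, star_trivial]
    exact tsum_congr fun m => by ring
  · obtain ⟨m, hm⟩ := hspan y hy
    calc 0 < h m * (u m ⬝ᵥ y) ^ 2 := mul_pos (hpos m) (by positivity)
      _ ≤ _ := mul_sq_le_dotProduct_weightedGram_mulVec (fun k => (hpos k).le) hsum m y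

end WeightedGram

lemma exists_dotProduct_ne_zero_of_det_ne_zero {N : ℕ} {u : ℕ → Fin N → ℝ}
    (hdet : (Matrix.of fun i j : Fin N => u i j).det ≠ 0) {y : Fin N → ℝ} (hy : y ≠ 0) :
    ∃ m, u m ⬝ᵥ y ≠ 0 := by
  by_contra! h
  exact hdet (exists_mulVec_eq_zero_iff.1 ⟨y, hy, funext fun i => h i⟩)

def cappedWeights (σ : ℕ → ℝ) (c m : ℕ) : ℝ := if m < c then σ 0 else σ m

section CappedWeights

variable {σ : ℕ → ℝ}

lemma cappedWeights_pos (hσ : ∀ m, 0 < σ m) (c m : ℕ) : 0 < cappedWeights σ c m := by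
  unfold cappedWeights; split_ifs <;> apply hσ

lemma cappedWeights_of_le {c m : ℕ} (h : c ≤ m) : cappedWeights σ c m = σ m :=
  if_neg h.not_gt

lemma summable_cappedWeights_mul {f : ℕ → ℝ} (hf : Summable fun m => σ m * f m) (c : ℕ) :
    Summable fun m => cappedWeights σ c m * f m := by
  refine (summable_nat_add_iff c).1 (((summable_nat_add_iff c).2 hf).congr fun m => ?_)
  rw [cappedWeights_of_le (Nat.le_add_left c m)]

lemma cappedWeights_succ (c : ℕ) :
    cappedWeights σ (c + 1) = cappedWeights σ c + Pi.single c (σ 0 - σ c) := by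
  ext m
  rcases lt_trichotomy m c with hm | rfl | hm
  · simp [cappedWeights, hm, hm.ne, Nat.lt_succ_of_lt hm]
  · simp [cappedWeights]
  · simp [cappedWeights, hm.ne', not_lt.2 hm.le, not_lt.2 (Nat.succ_le_of_lt hm)]

end CappedWeights

theorem stmt10_general {X : Type*}
    (e : ℕ → X → ℝ) (σ : ℕ → ℝ)
    (hσpos : ∀ m, 0 < σ m) (hσanti : Antitone σ)
    (hdiag : ∀ z : X, Summable fun m => σ m * (e m z) ^ 2)
    (N : ℕ) (x : Fin N → X)
    (u : ℕ → Fin N → ℝ) (hu : ∀ m, u m = fun j => e m (x j))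
    (Kl : ℕ → Matrix (Fin N) (Fin N) ℝ)
    (hKl : ∀ c, Kl c = Matrix.of fun i j : Fin N =>
      ∑' m : ℕ, (if m < c then σ 0 else σ m) * e m (x i) * e m (x j))
    (Δ : Fin N → ℕ → ℝ)
    (hΔ : ∀ (n : Fin N) (c : ℕ), Δ n c =
      (if n.val < c then σ 0 else σ n.val) * (u n.val ⬝ᵥ (Kl c)⁻¹.mulVec (u n.val)))
    (hEdet : (Matrix.of fun i j : Fin N => e i.val (x j)).det ≠ 0) :
    (∀ c : ℕ, 1 ≤ c → c ≤ N → IsUnit (Kl c)) ∧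
    (∀ n : Fin N, n.val ≠ 0 →
      σ n.val * (1 - Δ n n.val) ≤ σ 0 * (1 - Δ n (n.val + 1))) ∧
    (∀ n : Fin N, n.val ≠ 0 → ∀ ℓ : Fin N, ℓ.val ≠ 0 → ℓ ≠ n →
      1 - Δ n ℓ.val ≤ 1 - Δ n (ℓ.val + 1)) := by
  have hu' : u = fun m j => e m (x j) := funext hu
  have hsum : ∀ c (i j : Fin N), Summable fun m => cappedWeights σ c m * u m i * u m j :=
    fun c i j => by
      have hσ := summable_mul_mul_of_summable_mul_sq_s10 (fun m => (hσpos m).le) (hdiag (x i))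
        (hdiag (x j))
      simp only [mul_assoc] at hσ
      simpa only [hu', mul_assoc] using summable_cappedWeights_mul hσ c
  have hK : ∀ c, Kl c = weightedGram (cappedWeights σ c) u := fun c => by rw [hKl, hu']; rfl
  have hPD : ∀ c, (Kl c).PosDef := fun c => hK c ▸ posDef_weightedGram
    (cappedWeights_pos hσpos c) (hsum c) fun y hy =>
      exists_dotProduct_ne_zero_of_det_ne_zero (u := u) (by rwa [hu']) hy
  have hstep : ∀ c, Kl (c + 1) = Kl c + (σ 0 - σ c) • vecMulVec (u c) (u c) := fun c => by
    rw [hK, hK, cappedWeights_succ, weightedGram_add_single (hsum c)]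
  refine ⟨fun c _ _ => (hPD c).isUnit, fun n _ => ?_, fun n _ ℓ _ hℓn => ?_⟩
  · rw [hΔ, hΔ, if_neg n.val.lt_irrefl, if_pos n.val.lt_succ_self, hstep]
    refine mul_one_sub_mul_dotProduct_inv_mulVec_le (hPD n) (hσanti n.val.zero_le)
      (u n) fun y => ?_
    simpa only [hK, cappedWeights_of_le le_rfl] using mul_sq_le_dotProduct_weightedGram_mulVec
      (fun m => (cappedWeights_pos hσpos n m).le) (hsum n) n y
  · have hcoef : (n.val < ℓ.val + 1) ↔ n.val < ℓ.val := by
      have := Fin.val_ne_of_ne hℓn; omega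
    rw [hΔ, hΔ, if_congr hcoef rfl rfl]
    have hle := (hPD ℓ).dotProduct_inv_mulVec_le (B := Kl (ℓ.val + 1)) (by
      simpa [hstep] using (posSemidef_vecMulVec_self_star (u ℓ)).smul
        (sub_nonneg.2 (hσanti ℓ.val.zero_le))) (u n)
    have hcoef_nonneg : 0 ≤ (if n.val < ℓ.val then σ 0 else σ n.val) := by
      split_ifs <;> exact (hσpos _).le
    exact sub_le_sub_left (mul_le_mul_of_nonneg_left hle hcoef_nonneg) 1

/-- **Proposition 8 of the paper.** For the interpolating kernels `K^{(ℓ)}(x)`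
(first `ℓ` eigenvalues capped at `σ_1`), with `Δ_n^{(ℓ)}(x) = σ^{(ℓ)}_n u_nᵀ (K^{(ℓ)}(x))⁻¹ u_n`:
if `det E(x) ≠ 0` then each `K^{(ℓ)}(x)`, `ℓ ∈ [N]`, is invertible, and for `n ∈ [N]`, `n ≠ 1`:
(i) `σ_n (1 − Δ_n^{(n-1)}) ≤ σ_1 (1 − Δ_n^{(n)})`, and
(ii) for `ℓ ∈ [N] \ {1,n}`: `1 − Δ_n^{(ℓ-1)} ≤ 1 − Δ_n^{(ℓ)}`.
Indexing is 0-based: the matrix `Kl c` has its first `c` eigenvalues capped, so the paper's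
`K^{(ℓ)}` is `Kl ℓ`; the paper's index `n ∈ [N]` corresponds to `n : Fin N` via `n ↦ n+1`. -/
theorem stmt10 {X : Type*}
    (e : ℕ → X → ℝ) (σ : ℕ → ℝ)
    (hσpos : ∀ m, 0 < σ m) (hσanti : Antitone σ) (hσsum : Summable σ)
    (hdiag : ∀ z : X, Summable fun m => σ m * (e m z) ^ 2)
    (N : ℕ) (x : Fin N → X)
    (u : ℕ → Fin N → ℝ) (hu : ∀ m, u m = fun j => e m (x j))
    (Kl : ℕ → Matrix (Fin N) (Fin N) ℝ)
    (hKl : ∀ c, Kl c = Matrix.of fun i j : Fin N =>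
      ∑' m : ℕ, (if m < c then σ 0 else σ m) * e m (x i) * e m (x j))
    (Δ : Fin N → ℕ → ℝ)
    (hΔ : ∀ (n : Fin N) (c : ℕ), Δ n c =
      (if n.val < c then σ 0 else σ n.val) * (u n.val ⬝ᵥ (Kl c)⁻¹.mulVec (u n.val)))
    (hEdet : (Matrix.of fun i j : Fin N => e i.val (x j)).det ≠ 0) :
    (∀ c : ℕ, 1 ≤ c → c ≤ N → IsUnit (Kl c)) ∧
    (∀ n : Fin N, n.val ≠ 0 →
      σ n.val * (1 - Δ n n.val) ≤ σ 0 * (1 - Δ n (n.val + 1))) ∧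
    (∀ n : Fin N, n.val ≠ 0 → ∀ ℓ : Fin N, ℓ.val ≠ 0 → ℓ ≠ n →
      1 - Δ n ℓ.val ≤ 1 - Δ n (ℓ.val + 1)) :=
  stmt10_general e σ hσpos hσanti hdiag N x u hu Kl hKl Δ hΔ hEdet
end

section
/- Let N ≤ M, let A ∈ ℝ^{N×M} have full rank N, let i ∈ [M] and ρ > 0, and let W ∈ ℝ^{M×M} be the diagonal matrix with W_{ii} = √(1+ρ) and W_{jj} = 1 for j ≠ i. Then τ_i(AW) = (1+ρ) τ_i(A) / (1 + ρ τ_i(A)) ≥ τ_i(A), and for every j ∈ [M] with j ≠ i, τ_j(AW) = τ_j(A) − ρ τ_{i,j}(A)² / (1 + ρ τ_i(A)) ≤ τ_j(A). -/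
/-!
The Gram matrix of `AW` is the rank-one update `AAᵀ + ρ aᵢaᵢᵀ`, so by Sherman–Morrison the
hat matrix `H = Aᵀ(AAᵀ)⁻¹A`, whose entries are the (cross-)leverage scores, becomes the
matrix with entries `W_{jj} W_{ll} (H_{jl} - ρ H_{ji} H_{il} / (1 + ρ H_{ii}))`.
Since `H` is a symmetric idempotent, `H_{ii} = ∑ₖ H_{ik}²` lies in `[0, 1]`, which gives both
inequalities.
-/

open Matrix

namespace Matrix

section ShermanMorrison

variable {K : Type*} [Field K] {n : Type*} [Fintype n] [DecidableEq n]
  {S : Matrix n n K} {u w : n → K}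

theorem inv_add_vecMulVec (hS : IsUnit S.det) (hc : 1 + w ⬝ᵥ S⁻¹ *ᵥ u ≠ 0) :
    (S + vecMulVec u w)⁻¹ =
      S⁻¹ - (1 + w ⬝ᵥ S⁻¹ *ᵥ u)⁻¹ • vecMulVec (S⁻¹ *ᵥ u) (w ᵥ* S⁻¹) := by
  refine inv_eq_right_inv ?_
  have hSS : S * S⁻¹ = 1 := mul_nonsing_inv S hS
  rw [Matrix.add_mul, Matrix.mul_sub, Matrix.mul_sub, Matrix.mul_smul, Matrix.mul_smul,
    hSS, mul_vecMulVec, mulVec_mulVec, hSS, one_mulVec, vecMulVec_mul, vecMulVec_mul_vecMulVec,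
    vecMulVec_smul]
  match_scalars
  · rfl
  · field_simp
    ring

theorem dotProduct_inv_add_vecMulVec_mulVec (hS : IsUnit S.det)
    (hc : 1 + w ⬝ᵥ S⁻¹ *ᵥ u ≠ 0) (x y : n → K) :
    x ⬝ᵥ (S + vecMulVec u w)⁻¹ *ᵥ y =
      x ⬝ᵥ S⁻¹ *ᵥ y - (x ⬝ᵥ S⁻¹ *ᵥ u) * (w ⬝ᵥ S⁻¹ *ᵥ y) / (1 + w ⬝ᵥ S⁻¹ *ᵥ u) := by
  rw [inv_add_vecMulVec hS hc, sub_mulVec, dotProduct_sub, smul_mulVec, dotProduct_smul,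
    vecMulVec_mulVec, ← dotProduct_mulVec]
  simp only [op_smul_eq_smul, dotProduct_smul, smul_eq_mul]
  ring

end ShermanMorrison

section HatMatrix

variable {R : Type*} [CommRing R] {n m : Type*} [Fintype n] [Fintype m] [DecidableEq n]

noncomputable def hatMatrix (A : Matrix n m R) : Matrix m m R := Aᵀ * (A * Aᵀ)⁻¹ * A

theorem hatMatrix_apply (A : Matrix n m R) (j l : m) :
    hatMatrix A j l = Aᵀ j ⬝ᵥ (A * Aᵀ)⁻¹ *ᵥ Aᵀ l := by
  rw [hatMatrix, Matrix.mul_assoc, mul_apply']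
  rfl

theorem isSymm_hatMatrix (A : Matrix n m R) : (hatMatrix A).IsSymm := by
  rw [IsSymm, hatMatrix, transpose_mul, transpose_mul, transpose_transpose, transpose_nonsing_inv,
    transpose_mul, transpose_transpose, Matrix.mul_assoc]

theorem hatMatrix_mul_self {A : Matrix n m R} (hA : IsUnit (A * Aᵀ).det) :
    hatMatrix A * hatMatrix A = hatMatrix A := by
  simp only [hatMatrix, Matrix.mul_assoc]
  rw [← Matrix.mul_assoc A, ← Matrix.mul_assoc (A * Aᵀ), mul_nonsing_inv _ hA, Matrix.one_mul]

end HatMatrix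

theorem IsSymm.apply_self_mem_Icc_of_mul_self {R : Type*} [Field R] [LinearOrder R]
    [IsStrictOrderedRing R] {m : Type*} [Fintype m] {H : Matrix m m R} (hH : H.IsSymm)
    (hidem : H * H = H) (i : m) : H i i ∈ Set.Icc 0 1 := by
  have hsum : H i i = ∑ k, H i k ^ 2 := by
    conv_lhs => rw [← hidem]
    exact Finset.sum_congr rfl fun k _ => by
      show H i k * H k i = H i k ^ 2
      rw [sq, hH.apply i k]
  have hsq : H i i ^ 2 ≤ H i i :=
    hsum ▸ Finset.single_le_sum (fun k _ => sq_nonneg (H i k)) (Finset.mem_univ i)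
  have hnonneg : 0 ≤ H i i := hsum ▸ Finset.sum_nonneg fun k _ => sq_nonneg (H i k)
  exact ⟨hnonneg, by nlinarith⟩

theorem isUnit_det_mul_transpose_of_rank_eq_card {R : Type*} [Field R] [LinearOrder R]
    [IsStrictOrderedRing R] {n m : Type*} [Fintype n] [Fintype m] [DecidableEq n]
    {A : Matrix n m R} (hA : A.rank = Fintype.card n) : IsUnit (A * Aᵀ).det := by
  rw [← isUnit_iff_isUnit_det, ← mulVec_surjective_iff_isUnit]
  have hrange : LinearMap.range (A * Aᵀ).mulVecLin = ⊤ := by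
    refine Submodule.eq_top_of_finrank_eq ?_
    rw [Module.finrank_fintype_fun_eq_card, ← hA, ← rank_self_mul_transpose]
    rfl
  exact LinearMap.range_eq_top.mp hrange

theorem mul_diagonal_mul_transpose_mul_diagonal {R : Type*} [CommRing R]
    {n m : Type*} [Fintype m] [DecidableEq m] (A : Matrix n m R) {d : m → R} {i : m}
    (hd : ∀ j, j ≠ i → d j = 1) :
    A * diagonal d * (A * diagonal d)ᵀ = A * Aᵀ + vecMulVec (Aᵀ i) ((d i * d i - 1) • Aᵀ i) := by
  ext r s
  rw [mul_apply]
  simp only [transpose_apply, mul_diagonal]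
  simp only [add_apply, mul_apply, transpose_apply, vecMulVec_apply, Pi.smul_apply, smul_eq_mul]
  have hterm : ∀ j, A r j * d j * (A s j * d j) =
      A r j * A s j + if j = i then A r i * ((d i * d i - 1) * A s i) else 0 := by
    intro j
    split_ifs with hj
    · subst hj
      ring
    · rw [hd j hj]
      ring
  rw [Finset.sum_congr rfl fun j _ => hterm j, Finset.sum_add_distrib, Finset.sum_ite_eq']
  simp

section Reweighting

variable {K : Type*} [Field K] {n m : Type*} [Fintype n] [Fintype m] [DecidableEq n]
  [DecidableEq m] {A : Matrix n m K} {d : m → K} {i : m} {ρ : K}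

theorem hatMatrix_mul_diagonal_apply (hA : IsUnit (A * Aᵀ).det) (hd : ∀ j, j ≠ i → d j = 1)
    (hdi : d i * d i = 1 + ρ) (hc : 1 + ρ * hatMatrix A i i ≠ 0) (j l : m) :
    hatMatrix (A * diagonal d) j l = d j * d l *
      (hatMatrix A j l - ρ * hatMatrix A j i * hatMatrix A i l / (1 + ρ * hatMatrix A i i)) := by
  have hρ : d i * d i - 1 = ρ := by rw [hdi, add_sub_cancel_left]
  have hcol : ∀ k, (A * diagonal d)ᵀ k = d k • Aᵀ k := fun k => by
    ext r
    simp [mul_comm]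
  have hc' : 1 + ((d i * d i - 1) • Aᵀ i) ⬝ᵥ (A * Aᵀ)⁻¹ *ᵥ Aᵀ i ≠ 0 := by
    rwa [smul_dotProduct, ← hatMatrix_apply, hρ]
  rw [hatMatrix_apply, hcol, hcol, mul_diagonal_mul_transpose_mul_diagonal A hd, smul_dotProduct,
    mulVec_smul, dotProduct_smul, dotProduct_inv_add_vecMulVec_mulVec hA hc']
  simp only [smul_dotProduct, ← hatMatrix_apply, smul_eq_mul, hρ]
  ring

theorem hatMatrix_mul_diagonal_apply_self (hA : IsUnit (A * Aᵀ).det)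
    (hd : ∀ j, j ≠ i → d j = 1) (hdi : d i * d i = 1 + ρ) (hc : 1 + ρ * hatMatrix A i i ≠ 0) :
    hatMatrix (A * diagonal d) i i = (1 + ρ) * hatMatrix A i i / (1 + ρ * hatMatrix A i i) := by
  rw [hatMatrix_mul_diagonal_apply hA hd hdi hc, hdi]
  field_simp
  ring

theorem hatMatrix_mul_diagonal_apply_self_of_ne (hA : IsUnit (A * Aᵀ).det)
    (hd : ∀ j, j ≠ i → d j = 1) (hdi : d i * d i = 1 + ρ) (hc : 1 + ρ * hatMatrix A i i ≠ 0)
    {j : m} (hj : j ≠ i) :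
    hatMatrix (A * diagonal d) j j =
      hatMatrix A j j - ρ * hatMatrix A i j ^ 2 / (1 + ρ * hatMatrix A i i) := by
  rw [hatMatrix_mul_diagonal_apply hA hd hdi hc, hd j hj, (isSymm_hatMatrix A).apply i j]
  ring

end Reweighting

end Matrix

theorem le_one_add_mul_div_one_add_mul {K : Type*} [Field K] [LinearOrder K]
    [IsStrictOrderedRing K] {ρ t : K} (hρ : 0 ≤ ρ) (ht : t ∈ Set.Icc 0 1) :
    t ≤ (1 + ρ) * t / (1 + ρ * t) := by
  rw [le_div_iff₀ (by nlinarith [ht.1])]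
  nlinarith [mul_nonneg hρ (mul_nonneg ht.1 (sub_nonneg.2 ht.2))]

theorem stmt11_general (N M : ℕ)
    (A : Matrix (Fin N) (Fin M) ℝ) (hrank : A.rank = N)
    (i : Fin M) (ρ : ℝ) (hρ : 0 < ρ)
    (W : Matrix (Fin M) (Fin M) ℝ)
    (hW : W = Matrix.diagonal fun j => if j = i then Real.sqrt (1 + ρ) else 1)
    (τ : Matrix (Fin N) (Fin M) ℝ → Fin M → ℝ)
    (hτ : ∀ B j, τ B j = (fun r => B r j) ⬝ᵥ (B * Bᵀ)⁻¹.mulVec fun r => B r j)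
    (τc : Matrix (Fin N) (Fin M) ℝ → Fin M → Fin M → ℝ)
    (hτc : ∀ B j l, τc B j l = (fun r => B r j) ⬝ᵥ (B * Bᵀ)⁻¹.mulVec fun r => B r l) :
    τ (A * W) i = (1 + ρ) * τ A i / (1 + ρ * τ A i) ∧
    τ A i ≤ τ (A * W) i ∧
    ∀ j : Fin M, j ≠ i →
      τ (A * W) j = τ A j - ρ * (τc A i j) ^ 2 / (1 + ρ * τ A i) ∧
      τ (A * W) j ≤ τ A j := by
  have hτH : ∀ B j, τ B j = hatMatrix B j j := fun B j =>
    (hτ B j).trans (hatMatrix_apply B j j).symm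
  have hτcH : ∀ j, τc A i j = hatMatrix A i j := fun j =>
    (hτc A i j).trans (hatMatrix_apply A i j).symm
  have hA : IsUnit (A * Aᵀ).det :=
    isUnit_det_mul_transpose_of_rank_eq_card (by rwa [Fintype.card_fin])
  have ht := (isSymm_hatMatrix A).apply_self_mem_Icc_of_mul_self (hatMatrix_mul_self hA) i
  have hc : 0 < 1 + ρ * hatMatrix A i i := by nlinarith [ht.1]
  set d : Fin M → ℝ := fun j => if j = i then Real.sqrt (1 + ρ) else 1
  have hd : ∀ j, j ≠ i → d j = 1 := fun j hj => if_neg hj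
  have hdi : d i * d i = 1 + ρ := by
    simp only [d, if_pos rfl]
    exact Real.mul_self_sqrt (by linarith)
  subst hW
  simp only [hτH, hτcH]
  rw [hatMatrix_mul_diagonal_apply_self hA hd hdi hc.ne']
  refine ⟨rfl, le_one_add_mul_div_one_add_mul hρ.le ht, fun j hj => ?_⟩
  rw [hatMatrix_mul_diagonal_apply_self_of_ne hA hd hdi hc.ne' hj]
  exact ⟨rfl, sub_le_self _ (div_nonneg (by positivity) hc.le)⟩

/-- **leverage scores under rank-one reweighting.** For full-rank
`A ∈ ℝ^{N×M}` (`N ≤ M`), `ρ > 0`, and `W` diagonal with `W_{ii} = √(1+ρ)` and `1` elsewhere,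
`τ_i(AW) = (1+ρ)τ_i(A)/(1+ρτ_i(A)) ≥ τ_i(A)` and for `j ≠ i`,
`τ_j(AW) = τ_j(A) − ρ τ_{i,j}(A)²/(1+ρτ_i(A)) ≤ τ_j(A)`. -/
theorem stmt11 (N M : ℕ) (hNM : N ≤ M)
    (A : Matrix (Fin N) (Fin M) ℝ) (hrank : A.rank = N)
    (i : Fin M) (ρ : ℝ) (hρ : 0 < ρ)
    (W : Matrix (Fin M) (Fin M) ℝ)
    (hW : W = Matrix.diagonal fun j => if j = i then Real.sqrt (1 + ρ) else 1)
    (τ : Matrix (Fin N) (Fin M) ℝ → Fin M → ℝ)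
    (hτ : ∀ B j, τ B j = (fun r => B r j) ⬝ᵥ (B * Bᵀ)⁻¹.mulVec fun r => B r j)
    (τc : Matrix (Fin N) (Fin M) ℝ → Fin M → Fin M → ℝ)
    (hτc : ∀ B j l, τc B j l = (fun r => B r j) ⬝ᵥ (B * Bᵀ)⁻¹.mulVec fun r => B r l) :
    τ (A * W) i = (1 + ρ) * τ A i / (1 + ρ * τ A i) ∧
    τ A i ≤ τ (A * W) i ∧
    ∀ j : Fin M, j ≠ i →
      τ (A * W) j = τ A j - ρ * (τc A i j) ^ 2 / (1 + ρ * τ A i) ∧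
      τ (A * W) j ≤ τ A j :=
  stmt11_general N M A hrank i ρ hρ W hW τ hτ τc hτc
end
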